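/- arXiv:2101.02533 — 9 statements merged into one kernel-verified Lean document; each statement's English description precedes it below -/
import Mathlib

section
/- Let r ≥ 0 and suppose ‖w^(i) − w̄‖ ≤ r and ‖u^(i) − ū‖ ≤ r for all i = 1,…,k. Consider the linear classifier f(x) = sgn((w̄ − ū)·x). Then for every x ∈ ℝ^d with |(w̄ − ū)·x| ≥ 2r‖x‖, it holds that sgn(N(x)) = sgn((w̄ − ū)·x). -/
open scoped RealInnerProductSpace BigOperators

/-- Leaky ReLU activation. -/
noncomputable def lrelu (α z : ℝ) : ℝ := max z (α * z)

/-- Two-layer leaky ReLU network with fixed second layer. -/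
noncomputable def net {d k : ℕ} (α v : ℝ)
    (w u : Fin k → EuclideanSpace ℝ (Fin d)) (x : EuclideanSpace ℝ (Fin d)) : ℝ :=
  v * ∑ i, lrelu α ⟪w i, x⟫ - v * ∑ i, lrelu α ⟪u i, x⟫

lemma lrelu_diff_ge {α : ℝ} (hα0 : 0 < α) (hα1 : α < 1) {a b : ℝ} (h : b ≤ a) :
    α * (a - b) ≤ lrelu α a - lrelu α b := by
  unfold lrelu
  rcases max_cases a (α * a) with ⟨h1, h2⟩ | ⟨h1, h2⟩ <;>
    rcases max_cases b (α * b) with ⟨h3, h4⟩ | ⟨h3, h4⟩ <;> nlinarith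

/-- If all `w` neurons are within radius `r` of their mean `w̄` and all `u` neurons are
within radius `r` of their mean `ū`, then for every `x` with
`|(w̄ - ū)·x| ≥ 2r‖x‖`, the sign of the network output agrees with the linear
classifier `sgn((w̄ - ū)·x)`. -/
theorem clustered_implies_linear {d k : ℕ} (hk : 1 ≤ k) (α v r : ℝ)
    (hα0 : 0 < α) (hα1 : α < 1) (hv : 0 < v) (hr : 0 ≤ r)
    (w u : Fin k → EuclideanSpace ℝ (Fin d))
    (wbar ubar : EuclideanSpace ℝ (Fin d))
    (hwbar : wbar = (k : ℝ)⁻¹ • ∑ i, w i)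
    (hubar : ubar = (k : ℝ)⁻¹ • ∑ i, u i)
    (hw : ∀ i, ‖w i - wbar‖ ≤ r)
    (hu : ∀ i, ‖u i - ubar‖ ≤ r)
    (x : EuclideanSpace ℝ (Fin d))
    (hx : |⟪wbar - ubar, x⟫| ≥ 2 * r * ‖x‖) :
    Real.sign (net α v w u x) = Real.sign ⟪wbar - ubar, x⟫ := by
  have hkpos : (0 : ℝ) < (k : ℝ) := by exact_mod_cast hk
  have hk0 : (k : ℝ) ≠ 0 := ne_of_gt hkpos
  set s : ℝ := ⟪wbar - ubar, x⟫ with hsdef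
  have hsx : s = ⟪wbar, x⟫ - ⟪ubar, x⟫ := by
    rw [hsdef, inner_sub_left]
  have hrx : 0 ≤ r * ‖x‖ := mul_nonneg hr (norm_nonneg x)
  have hwi : ∀ i, |⟪w i, x⟫ - ⟪wbar, x⟫| ≤ r * ‖x‖ := by
    intro i
    have h := abs_real_inner_le_norm (w i - wbar) x
    rw [inner_sub_left] at h
    exact h.trans (mul_le_mul_of_nonneg_right (hw i) (norm_nonneg x))
  have hui : ∀ i, |⟪u i, x⟫ - ⟪ubar, x⟫| ≤ r * ‖x‖ := by
    intro i
    have h := abs_real_inner_le_norm (u i - ubar) x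
    rw [inner_sub_left] at h
    exact h.trans (mul_le_mul_of_nonneg_right (hu i) (norm_nonneg x))
  have hsumw : ∑ i, ⟪w i, x⟫ = (k : ℝ) * ⟪wbar, x⟫ := by
    rw [hwbar, real_inner_smul_left, sum_inner]
    field_simp
  have hsumu : ∑ i, ⟪u i, x⟫ = (k : ℝ) * ⟪ubar, x⟫ := by
    rw [hubar, real_inner_smul_left, sum_inner]
    field_simp
  rcases lt_trichotomy s 0 with hneg | hzero | hpos
  · -- s < 0 : net < 0
    have hxs : -s ≥ 2 * r * ‖x‖ := by
      rw [abs_of_neg hneg] at hx; linarith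
    have hab : ∀ i, ⟪w i, x⟫ ≤ ⟪u i, x⟫ := by
      intro i
      have h1 := abs_le.mp (hwi i)
      have h2 := abs_le.mp (hui i)
      have := hxs
      cases h1; cases h2; linarith [hsx ▸ this]
    have hsum : ∑ i, (α * (⟪u i, x⟫ - ⟪w i, x⟫)) ≤
        ∑ i, (lrelu α ⟪u i, x⟫ - lrelu α ⟪w i, x⟫) :=
      Finset.sum_le_sum fun i _ => lrelu_diff_ge hα0 hα1 (hab i)
    rw [Finset.sum_sub_distrib, ← Finset.mul_sum, Finset.sum_sub_distrib,
      hsumw, hsumu] at hsum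
    have heq : α * ((k : ℝ) * ⟪ubar, x⟫ - (k : ℝ) * ⟪wbar, x⟫) = α * ((k : ℝ) * (-s)) := by
      rw [hsx]; ring
    rw [heq] at hsum
    have h1 : 0 < ∑ i, lrelu α ⟪u i, x⟫ - ∑ i, lrelu α ⟪w i, x⟫ :=
      lt_of_lt_of_le (mul_pos hα0 (mul_pos hkpos (neg_pos.mpr hneg))) hsum
    have hnet : net α v w u x < 0 := by
      unfold net
      nlinarith [mul_pos hv h1]
    rw [Real.sign_of_neg hnet, Real.sign_of_neg hneg]
  · -- s = 0 : net = 0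
    have hrx0 : r * ‖x‖ = 0 := by
      rw [hzero] at hx
      simp at hx
      nlinarith
    have hab : ∀ i, ⟪w i, x⟫ = ⟪u i, x⟫ := by
      intro i
      have h1 := abs_le.mp (hwi i)
      have h2 := abs_le.mp (hui i)
      rw [hrx0] at h1 h2
      have : ⟪wbar, x⟫ = ⟪ubar, x⟫ := by
        have := hsx; rw [hzero] at this; linarith
      cases h1; cases h2; linarith
    have hnet : net α v w u x = 0 := by
      unfold net
      rw [Finset.sum_congr rfl fun i _ => by rw [hab i]]
      ring
    rw [hnet, hzero]
  · -- s > 0 : net > 0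
    have hxs : s ≥ 2 * r * ‖x‖ := by
      rw [abs_of_pos hpos] at hx; linarith
    have hab : ∀ i, ⟪u i, x⟫ ≤ ⟪w i, x⟫ := by
      intro i
      have h1 := abs_le.mp (hwi i)
      have h2 := abs_le.mp (hui i)
      cases h1; cases h2; linarith [hsx ▸ hxs]
    have hsum : ∑ i, (α * (⟪w i, x⟫ - ⟪u i, x⟫)) ≤
        ∑ i, (lrelu α ⟪w i, x⟫ - lrelu α ⟪u i, x⟫) :=
      Finset.sum_le_sum fun i _ => lrelu_diff_ge hα0 hα1 (hab i)
    rw [Finset.sum_sub_distrib, ← Finset.mul_sum, Finset.sum_sub_distrib,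
      hsumw, hsumu] at hsum
    have heq : α * ((k : ℝ) * ⟪wbar, x⟫ - (k : ℝ) * ⟪ubar, x⟫) = α * ((k : ℝ) * s) := by
      rw [hsx]; ring
    rw [heq] at hsum
    have h1 : 0 < ∑ i, lrelu α ⟪w i, x⟫ - ∑ i, lrelu α ⟪u i, x⟫ :=
      lt_of_lt_of_le (mul_pos hα0 (mul_pos hkpos hpos)) hsum
    have hnet : 0 < net α v w u x := by
      unfold net
      nlinarith [mul_pos hv h1]
    rw [Real.sign_of_pos hnet, Real.sign_of_pos hpos]
end

section
/- Let r ≥ 0 and suppose ‖w^(i) − w̄‖ < r and ‖u^(i) − ū‖ < r for all i = 1,…,k. Then for every x ∈ ℝ^d such that |w̄·x| ≥ r‖x‖ and |ū·x| ≥ r‖x‖, it holds that sgn(N(x)) = sgn((w̄ − ū)·x). -/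
open scoped RealInnerProductSpace BigOperators

lemma sign_mul_pos_left {c t : ℝ} (hc : 0 < c) : Real.sign (c * t) = Real.sign t := by
  rcases lt_trichotomy t 0 with h | h | h
  · rw [Real.sign_of_neg h, Real.sign_of_neg (mul_neg_of_pos_of_neg hc h)]
  · simp [h]
  · rw [Real.sign_of_pos h, Real.sign_of_pos (mul_pos hc h)]

/-- If all neurons are strictly within radius `r` of their cluster means `w̄`, `ū`, then
for every `x` with `|w̄·x| ≥ r‖x‖` and `|ū·x| ≥ r‖x‖` the sign of the network
output agrees with the linear classifier `sgn((w̄ - ū)·x)`. -/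
theorem intersection_between_cones_linearity {d k : ℕ} (hk : 1 ≤ k) (α v r : ℝ)
    (hα0 : 0 < α) (hα1 : α < 1) (hv : 0 < v) (hr : 0 ≤ r)
    (w u : Fin k → EuclideanSpace ℝ (Fin d))
    (wbar ubar : EuclideanSpace ℝ (Fin d))
    (hwbar : wbar = (k : ℝ)⁻¹ • ∑ i, w i)
    (hubar : ubar = (k : ℝ)⁻¹ • ∑ i, u i)
    (hw : ∀ i, ‖w i - wbar‖ < r)
    (hu : ∀ i, ‖u i - ubar‖ < r)
    (x : EuclideanSpace ℝ (Fin d))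
    (hxw : |⟪wbar, x⟫| ≥ r * ‖x‖)
    (hxu : |⟪ubar, x⟫| ≥ r * ‖x‖) :
    Real.sign (net α v w u x) = Real.sign ⟪wbar - ubar, x⟫ := by
  have hkpos : (0:ℝ) < (k:ℝ) := by exact_mod_cast hk
  have hkne : (k:ℝ) ≠ 0 := ne_of_gt hkpos
  by_cases hx : x = 0
  · subst hx
    simp [net, lrelu, inner_zero_right]
  · have hxn : 0 < ‖x‖ := norm_pos_iff.mpr hx
    have i0 : Fin k := ⟨0, hk⟩
    have hrpos : 0 < r := lt_of_le_of_lt (norm_nonneg _) (hw i0)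
    have hrpos' : 0 < r * ‖x‖ := mul_pos hrpos hxn
    set a := ⟪wbar, x⟫ with ha_def
    set b := ⟪ubar, x⟫ with hb_def
    have ha0 : a ≠ 0 := by
      intro h; rw [h] at hxw; simp at hxw; linarith
    have hb0 : b ≠ 0 := by
      intro h; rw [h] at hxu; simp at hxu; linarith
    -- main sum computation for each cluster
    have main : ∀ (ww : Fin k → EuclideanSpace ℝ (Fin d)) (c : EuclideanSpace ℝ (Fin d)),
        c = (k:ℝ)⁻¹ • ∑ i, ww i → (∀ i, ‖ww i - c‖ < r) → r * ‖x‖ ≤ |⟪c, x⟫| →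
        ∑ i, lrelu α ⟪ww i, x⟫ = (k:ℝ) * (if 0 < ⟪c, x⟫ then ⟪c, x⟫ else α * ⟪c, x⟫) := by
      intro ww c hc hball hcone
      have hsumw : ∑ i, ww i = (k:ℝ) • c := by
        rw [hc, smul_smul, mul_inv_cancel₀ hkne, one_smul]
      have hsum : ∑ i, ⟪ww i, x⟫ = (k:ℝ) * ⟪c, x⟫ := by
        rw [← sum_inner, hsumw, real_inner_smul_left]
      have hi : ∀ i, |⟪ww i, x⟫ - ⟪c, x⟫| < r * ‖x‖ := by
        intro i
        have h1 := abs_real_inner_le_norm (ww i - c) x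
        rw [inner_sub_left] at h1
        exact lt_of_le_of_lt h1 (mul_lt_mul_of_pos_right (hball i) hxn)
      by_cases hpos : 0 < ⟪c, x⟫
      · have habs : |⟪c, x⟫| = ⟪c, x⟫ := abs_of_pos hpos
        have hall : ∀ i, 0 < ⟪ww i, x⟫ := by
          intro i
          have := (abs_lt.mp (hi i)).1
          rw [habs] at hcone
          linarith
        rw [if_pos hpos, ← hsum]
        refine Finset.sum_congr rfl fun i _ => ?_
        have hz := hall i
        unfold lrelu
        exact max_eq_left (by nlinarith)
      · have hneg : ⟪c, x⟫ < 0 := by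
          rcases lt_trichotomy (⟪c, x⟫) 0 with h | h | h
          · exact h
          · rw [h] at hcone; simp at hcone; linarith
          · exact absurd h hpos
        have habs : |⟪c, x⟫| = -⟪c, x⟫ := abs_of_neg hneg
        have hall : ∀ i, ⟪ww i, x⟫ < 0 := by
          intro i
          have := (abs_lt.mp (hi i)).2
          rw [habs] at hcone
          linarith
        rw [if_neg hpos]
        have : ∑ i, lrelu α ⟪ww i, x⟫ = ∑ i, α * ⟪ww i, x⟫ := by
          refine Finset.sum_congr rfl fun i _ => ?_
          have hz := hall i
          unfold lrelu
          exact max_eq_right (by nlinarith)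
        rw [this, ← Finset.mul_sum, hsum]; ring
    have hA := main w wbar hwbar hw hxw
    have hB := main u ubar hubar hu hxu
    have hnet : net α v w u x
        = (v * (k:ℝ)) * ((if 0 < a then a else α * a) - (if 0 < b then b else α * b)) := by
      rw [net, hA, hB]; ring
    have hinner : ⟪wbar - ubar, x⟫ = a - b := inner_sub_left _ _ _
    rw [hnet, hinner, sign_mul_pos_left (mul_pos hv hkpos)]
    rcases ha0.lt_or_gt with ha | ha <;> rcases hb0.lt_or_gt with hb | hb
    · rw [if_neg (not_lt.mpr ha.le), if_neg (not_lt.mpr hb.le), ← mul_sub,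
        sign_mul_pos_left hα0]
    · rw [if_neg (not_lt.mpr ha.le), if_pos hb,
        Real.sign_of_neg (by nlinarith), Real.sign_of_neg (by linarith)]
    · rw [if_pos ha, if_neg (not_lt.mpr hb.le),
        Real.sign_of_pos (by nlinarith), Real.sign_of_pos (by linarith)]
    · rw [if_pos ha, if_pos hb]
end

section
/- Let r ≥ 0 and suppose ‖w^(i) − w̄‖ < r and ‖u^(i) − ū‖ < r for all i = 1,…,k. Then: (1) for every x ∈ ℝ^d with |w̄·x| < r‖x‖, |ū·x| ≥ r‖x‖, and |(w̄ − ū)·x| ≥ 2r‖x‖, it holds that sgn(N(x)) = sgn((w̄ − ū)·x); and (2) for every x ∈ ℝ^d with |ū·x| < r‖x‖, |w̄·x| ≥ r‖x‖, and |(w̄ − ū)·x| ≥ 2r‖x‖, it holds that sgn(N(x)) = sgn((w̄ − ū)·x). -/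
set_option maxHeartbeats 800000


open scoped RealInnerProductSpace BigOperators

lemma one_cone_key {d k : ℕ} (hk : 1 ≤ k) (α v r : ℝ)
    (hα0 : 0 < α) (hα1 : α < 1) (hv : 0 < v)
    (w u : Fin k → EuclideanSpace ℝ (Fin d))
    (wbar ubar : EuclideanSpace ℝ (Fin d))
    (hwbar : wbar = (k : ℝ)⁻¹ • ∑ i, w i)
    (hubar : ubar = (k : ℝ)⁻¹ • ∑ i, u i)
    (hw : ∀ i, ‖w i - wbar‖ < r)
    (hu : ∀ i, ‖u i - ubar‖ < r)
    (x : EuclideanSpace ℝ (Fin d))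
    (h1 : |⟪wbar, x⟫| < r * ‖x‖)
    (h3 : |⟪wbar - ubar, x⟫| ≥ 2 * r * ‖x‖) :
    Real.sign (net α v w u x) = Real.sign ⟪wbar - ubar, x⟫ := by
  have hkpos : (0:ℝ) < (k:ℝ) := by exact_mod_cast Nat.lt_of_lt_of_le Nat.zero_lt_one hk
  have hx0 : 0 < r * ‖x‖ := lt_of_le_of_lt (abs_nonneg _) h1
  have hxn : 0 < ‖x‖ := by
    rcases (norm_nonneg x).lt_or_eq with h | h
    · exact h
    · rw [← h, mul_zero] at hx0; exact absurd hx0 (lt_irrefl 0)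
  set A := ⟪wbar, x⟫ with hA
  set B := ⟪ubar, x⟫ with hB
  have hD : ⟪wbar - ubar, x⟫ = A - B := inner_sub_left _ _ _
  have hsumw : ∑ i, ⟪w i, x⟫ = (k:ℝ) * A := by
    have : A = (k : ℝ)⁻¹ * ∑ i, ⟪w i, x⟫ := by
      rw [hA, hwbar, real_inner_smul_left, sum_inner]
    rw [this]; field_simp
  have hsumu : ∑ i, ⟪u i, x⟫ = (k:ℝ) * B := by
    have : B = (k : ℝ)⁻¹ * ∑ i, ⟪u i, x⟫ := by
      rw [hB, hubar, real_inner_smul_left, sum_inner]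
    rw [this]; field_simp
  have hwi : ∀ i, |⟪w i, x⟫ - A| < r * ‖x‖ := by
    intro i
    have h := abs_real_inner_le_norm (w i - wbar) x
    rw [inner_sub_left] at h
    exact lt_of_le_of_lt h (mul_lt_mul_of_pos_right (hw i) hxn)
  have hui : ∀ i, |⟪u i, x⟫ - B| < r * ‖x‖ := by
    intro i
    have h := abs_real_inner_le_norm (u i - ubar) x
    rw [inner_sub_left] at h
    exact lt_of_le_of_lt h (mul_lt_mul_of_pos_right (hu i) hxn)
  have hAabs := abs_lt.mp h1
  rw [hD] at h3 ⊢
  have hne : (Finset.univ : Finset (Fin k)).Nonempty := by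
    haveI : Nonempty (Fin k) := Fin.pos_iff_nonempty.mp hk
    exact Finset.univ_nonempty
  rcases le_abs.mp h3 with hpos | hneg
  · -- A - B ≥ 2 r ‖x‖, show net positive
    have hBneg : B < -(r * ‖x‖) := by nlinarith
    have hulin : ∀ i, lrelu α ⟪u i, x⟫ = α * ⟪u i, x⟫ := by
      intro i
      have h := abs_lt.mp (hui i)
      have hneg : ⟪u i, x⟫ < 0 := by nlinarith [h.2]
      unfold lrelu
      exact max_eq_right (by nlinarith)
    have hsumlu : ∑ i, lrelu α ⟪u i, x⟫ = α * ((k:ℝ) * B) := by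
      rw [Finset.sum_congr rfl (fun i _ => hulin i), ← Finset.mul_sum, hsumu]
    have hsumlw : α * ((k:ℝ) * A) ≤ ∑ i, lrelu α ⟪w i, x⟫ := by
      calc α * ((k:ℝ) * A) = ∑ i, α * ⟪w i, x⟫ := by
            rw [← Finset.mul_sum, hsumw]
        _ ≤ ∑ i, lrelu α ⟪w i, x⟫ :=
            Finset.sum_le_sum (fun i _ => le_max_right _ _)
    have hdiff : 0 < (∑ i, lrelu α ⟪w i, x⟫) - ∑ i, lrelu α ⟪u i, x⟫ := by
      rw [hsumlu]
      nlinarith [mul_le_mul_of_nonneg_left hpos (le_of_lt (mul_pos hα0 hkpos)),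
        mul_pos (mul_pos hα0 hkpos) hx0]
    have hnet : 0 < net α v w u x := by
      unfold net; nlinarith [mul_pos hv hdiff]
    rw [Real.sign_of_pos hnet, Real.sign_of_pos (by nlinarith : (0:ℝ) < A - B)]
  · -- -(A - B) ≥ 2 r ‖x‖, i.e. B - A ≥ 2 r ‖x‖, show net negative
    have hBpos : r * ‖x‖ < B := by nlinarith
    have hulin : ∀ i, lrelu α ⟪u i, x⟫ = ⟪u i, x⟫ := by
      intro i
      have h := abs_lt.mp (hui i)
      have hposi : 0 < ⟪u i, x⟫ := by nlinarith [h.1]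
      unfold lrelu
      exact max_eq_left (by nlinarith)
    have hsumlu : ∑ i, lrelu α ⟪u i, x⟫ = (k:ℝ) * B := by
      rw [Finset.sum_congr rfl (fun i _ => hulin i), hsumu]
    have lip : ∀ z a : ℝ, lrelu α z ≤ lrelu α a + |z - a| := by
      intro z a
      unfold lrelu
      apply max_le
      · nlinarith [le_max_left a (α * a), le_abs_self (z - a)]
      · nlinarith [le_max_right a (α * a),
          mul_le_mul_of_nonneg_left (le_abs_self (z - a)) hα0.le,
          mul_le_of_le_one_left (abs_nonneg (z - a)) hα1.le]
    have hlA : lrelu α A ≤ A + r * ‖x‖ := by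
      unfold lrelu
      apply max_le
      · linarith [hx0.le]
      · nlinarith [mul_lt_mul_of_pos_left hAabs.1 (by linarith : (0:ℝ) < 1 - α),
          mul_nonneg hα0.le hx0.le]
    have hsumlw : ∑ i, lrelu α ⟪w i, x⟫ < (k:ℝ) * (lrelu α A + r * ‖x‖) := by
      calc ∑ i, lrelu α ⟪w i, x⟫ < ∑ _i : Fin k, (lrelu α A + r * ‖x‖) := by
            apply Finset.sum_lt_sum_of_nonempty hne
            intro i _
            exact lt_of_le_of_lt (lip _ A) (by linarith [hwi i])
        _ = (k:ℝ) * (lrelu α A + r * ‖x‖) := by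
            rw [Finset.sum_const, Finset.card_univ, Fintype.card_fin, nsmul_eq_mul]
    have hdiff : (∑ i, lrelu α ⟪w i, x⟫) - (∑ i, lrelu α ⟪u i, x⟫) < 0 := by
      rw [hsumlu]
      nlinarith [mul_le_mul_of_nonneg_left hlA hkpos.le,
        mul_le_mul_of_nonneg_left hneg hkpos.le]
    have hnet : net α v w u x < 0 := by
      unfold net; nlinarith [mul_pos hv (neg_pos.mpr hdiff)]
    rw [Real.sign_of_neg hnet, Real.sign_of_neg (by nlinarith : A - B < 0)]

/-- If all neurons are strictly within radius `r` of their cluster means, then the sign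
of the network output agrees with `sgn((w̄ - ū)·x)` on the two "one-cone" regions:
(1) `|w̄·x| < r‖x‖`, `|ū·x| ≥ r‖x‖`, `|(w̄-ū)·x| ≥ 2r‖x‖`, and
(2) `|ū·x| < r‖x‖`, `|w̄·x| ≥ r‖x‖`, `|(w̄-ū)·x| ≥ 2r‖x‖`. -/
theorem one_cone_only_linearity {d k : ℕ} (hk : 1 ≤ k) (α v r : ℝ)
    (hα0 : 0 < α) (hα1 : α < 1) (hv : 0 < v) (hr : 0 ≤ r)
    (w u : Fin k → EuclideanSpace ℝ (Fin d))
    (wbar ubar : EuclideanSpace ℝ (Fin d))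
    (hwbar : wbar = (k : ℝ)⁻¹ • ∑ i, w i)
    (hubar : ubar = (k : ℝ)⁻¹ • ∑ i, u i)
    (hw : ∀ i, ‖w i - wbar‖ < r)
    (hu : ∀ i, ‖u i - ubar‖ < r) :
    (∀ x : EuclideanSpace ℝ (Fin d),
      |⟪wbar, x⟫| < r * ‖x‖ → |⟪ubar, x⟫| ≥ r * ‖x‖ →
      |⟪wbar - ubar, x⟫| ≥ 2 * r * ‖x‖ →
      Real.sign (net α v w u x) = Real.sign ⟪wbar - ubar, x⟫) ∧
    (∀ x : EuclideanSpace ℝ (Fin d),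
      |⟪ubar, x⟫| < r * ‖x‖ → |⟪wbar, x⟫| ≥ r * ‖x‖ →
      |⟪wbar - ubar, x⟫| ≥ 2 * r * ‖x‖ →
      Real.sign (net α v w u x) = Real.sign ⟪wbar - ubar, x⟫) := by
  constructor
  · intro x h1 _ h3
    exact one_cone_key hk α v r hα0 hα1 hv w u wbar ubar hwbar hubar hw hu x h1 h3
  · intro x h1 _ h3
    have e2 : ubar - wbar = -(wbar - ubar) := by abel
    have h3' : |⟪ubar - wbar, x⟫| ≥ 2 * r * ‖x‖ := by
      rw [e2, inner_neg_left, abs_neg]; exact h3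
    have key := one_cone_key hk α v r hα0 hα1 hv u w ubar wbar hubar hwbar hu hw x h1 h3'
    have e1 : net α v u w x = -(net α v w u x) := by unfold net; ring
    rw [e1, e2, inner_neg_left, Real.sign_neg, Real.sign_neg] at key
    linarith
end

section
/- Fix training data (x_1,y_1),…,(x_n,y_n) ∈ ℝ^d × {−1,+1} with ‖x_i‖ ≤ R_x for all i, and suppose there exists w* ∈ ℝ^d with y_i (w*·x_i) ≥ 1 for all i. Consider SGD in epochs with batch size one and learning rate η > 0: training proceeds in epochs, and in each epoch the n points are processed in some order (each point exactly once per epoch, the order may be arbitrary in each epoch); at each step t with current point (x_t,y_t), each neuron is updated by w_t^(j) = w_{t−1}^(j) + η v y_t |ℓ'(y_t N_{θ_{t−1}}(x_t))| σ'(w_{t−1}^(j)·x_t) x_t and u_t^(j) = u_{t−1}^(j) − η v y_t |ℓ'(y_t N_{θ_{t−1}}(x_t))| σ'(u_{t−1}^(j)·x_t) x_t, where σ'(z) = 1 for z > 0 and σ'(z) = α for z ≤ 0. Assume the initialization satisfies ‖w_0^(j)‖ ≤ R_0 and ‖u_0^(j)‖ ≤ R_0 for all j. Then for every ε > 0, setting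 ε_0 = ε/(1 + 2v²R_x²ηkn) and M(n,ε) = (R_x²/α² + 1/(kηv²α²))·‖w*‖²·n²·(1 + 1/ε_0)² + (√(R_0(8k²η²v²R_x² + 8kη))·‖w*‖^{1.5}·n^{1.5}·(1 + 1/ε_0)^{1.5})/(2k(ηvα)^{1.5}) + (2R_0‖w*‖·n·(1 + 1/ε_0))/(ηvα) + n, there exists a step t ≤ M(n,ε) such that L_S(θ_t) = (1/n)·Σ_{i=1}^n log(1 + exp(−y_i N_{θ_t}(x_i))) < ε. -/
set_option maxHeartbeats 4000000

open scoped RealInnerProductSpace BigOperators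

/-- Derivative of the leaky ReLU (with the convention `σ'(0) = α`). -/
noncomputable def lreluD (α z : ℝ) : ℝ := if 0 < z then 1 else α

/-- Derivative of the binary cross entropy loss `ℓ(q) = log(1 + e^{-q})`. -/
noncomputable def lossD (q : ℝ) : ℝ := -(1 + Real.exp q)⁻¹

namespace SGDAux

lemma lreluD_mul_self (α z : ℝ) (h1 : α ≤ 1) : lreluD α z * z = lrelu α z := by
  unfold lreluD lrelu
  by_cases h : 0 < z
  · rw [if_pos h, one_mul, max_eq_left]; nlinarith
  · push_neg at h
    rw [if_neg (not_lt.mpr h), max_eq_right, mul_comm]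
    nlinarith

lemma lreluD_bounds (α z : ℝ) (h0 : 0 < α) (h1 : α < 1) :
    α ≤ lreluD α z ∧ lreluD α z ≤ 1 := by
  unfold lreluD; split <;> constructor <;> linarith

lemma lrelu_lipschitz (α a b : ℝ) (h0 : 0 ≤ α) (h1 : α ≤ 1) :
    |lrelu α a - lrelu α b| ≤ |a - b| := by
  unfold lrelu
  rw [abs_le]
  constructor <;>
  · cases' max_cases a (α*a) with h1a h1a <;> cases' max_cases b (α*b) with h1b h1b <;>
      rw [h1a.1, h1b.1] <;> cases' abs_cases (a - b) with hd hd <;> nlinarith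

lemma sqrt_add_le (a b : ℝ) (ha : 0 ≤ a) (hb : 0 ≤ b) :
    Real.sqrt (a + b) ≤ Real.sqrt a + Real.sqrt b := by
  rw [← Real.sqrt_sq (by positivity : (0:ℝ) ≤ Real.sqrt a + Real.sqrt b)]
  apply Real.sqrt_le_sqrt
  nlinarith [Real.sq_sqrt ha, Real.sq_sqrt hb, Real.sqrt_nonneg a, Real.sqrt_nonneg b]

lemma sqrt_add_sqrt_le (a b : ℝ) (ha : 0 ≤ a) (hb : 0 ≤ b) :
    Real.sqrt a + Real.sqrt b ≤ Real.sqrt 2 * Real.sqrt (a + b) := by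
  rw [← Real.sqrt_mul (by norm_num)]
  rw [← Real.sqrt_sq (by positivity : (0:ℝ) ≤ Real.sqrt a + Real.sqrt b)]
  apply Real.sqrt_le_sqrt
  nlinarith [Real.sq_sqrt ha, Real.sq_sqrt hb, Real.sqrt_nonneg a, Real.sqrt_nonneg b,
    sq_nonneg (Real.sqrt a - Real.sqrt b)]

lemma sum_le_sqrt_card_mul {k : ℕ} (f : Fin k → ℝ) :
    ∑ j, f j ≤ Real.sqrt k * Real.sqrt (∑ j, f j ^ 2) := by
  rw [← Real.sqrt_mul (by positivity)]
  calc ∑ j, f j ≤ |∑ j, f j| := le_abs_self _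
    _ = Real.sqrt ((∑ j, f j)^2) := (Real.sqrt_sq_eq_abs _).symm
    _ ≤ _ := by
        apply Real.sqrt_le_sqrt
        have := sq_sum_le_card_mul_sum_sq (s := (Finset.univ : Finset (Fin k))) (f := f)
        simpa using this

lemma abs_lossD (q : ℝ) : |lossD q| = (1 + Real.exp q)⁻¹ := by
  unfold lossD
  rw [abs_neg, abs_of_pos]
  positivity

lemma g_le_one (q : ℝ) : (1 + Real.exp q)⁻¹ ≤ 1 := by
  rw [inv_le_one_iff₀]
  right; nlinarith [Real.exp_pos q]

lemma g_mul_q_le_one (q : ℝ) : (1 + Real.exp q)⁻¹ * q ≤ 1 := by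
  rw [inv_mul_le_iff₀ (by positivity)]
  nlinarith [Real.add_one_le_exp q, Real.exp_pos q]

lemma g_ge_of_loss_ge (q ε₀ : ℝ) (hε : 0 < ε₀) (h : ε₀ ≤ Real.log (1 + Real.exp (-q))) :
    ε₀ / (1 + ε₀) ≤ (1 + Real.exp q)⁻¹ := by
  have h1 : Real.exp ε₀ ≤ 1 + Real.exp (-q) := by
    rw [← Real.exp_log (by positivity : (0:ℝ) < 1 + Real.exp (-q))]
    exact Real.exp_le_exp.mpr h
  have h2 : ε₀ ≤ Real.exp (-q) := by nlinarith [Real.add_one_le_exp ε₀]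
  rw [div_le_iff₀ (by positivity)]
  rw [inv_mul_eq_div, le_div_iff₀ (by positivity)]
  have he : Real.exp (-q) * Real.exp q = 1 := by rw [← Real.exp_add]; simp
  have h4 : ε₀ * Real.exp q ≤ 1 := by
    calc ε₀ * Real.exp q ≤ Real.exp (-q) * Real.exp q :=
          mul_le_mul_of_nonneg_right h2 (Real.exp_pos q).le
      _ = 1 := he
  nlinarith

lemma g_le_of_loss_lt (q ε₀ : ℝ) (hε : 0 < ε₀) (h : Real.log (1 + Real.exp (-q)) < ε₀) :
    (1 + Real.exp q)⁻¹ ≤ ε₀ := by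
  have h1 : 1 + Real.exp (-q) < Real.exp ε₀ := by
    calc 1 + Real.exp (-q) = Real.exp (Real.log (1 + Real.exp (-q))) :=
          (Real.exp_log (by positivity)).symm
      _ < Real.exp ε₀ := Real.exp_lt_exp.mpr h
  have hg : (1 + Real.exp q)⁻¹ = 1 - (1 + Real.exp (-q))⁻¹ := by
    have e1 : Real.exp q * Real.exp (-q) = 1 := by
      rw [← Real.exp_add]; simp
    field_simp
    nlinarith [Real.exp_pos q, Real.exp_pos (-q)]
  rw [hg]
  have h2 : Real.exp (-ε₀) ≤ (1 + Real.exp (-q))⁻¹ := by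
    rw [Real.exp_neg, inv_le_inv₀ (by positivity) (by positivity)]
    exact h1.le
  nlinarith [Real.add_one_le_exp (-ε₀)]

lemma loss_lipschitz (a b : ℝ) :
    |Real.log (1 + Real.exp (-a)) - Real.log (1 + Real.exp (-b))| ≤ |a - b| := by
  have key : ∀ s t : ℝ, s ≤ t →
      Real.log (1 + Real.exp (-s)) - Real.log (1 + Real.exp (-t)) ≤ t - s := by
    intro s t hst
    have h1 : (0:ℝ) < 1 + Real.exp (-t) := by positivity
    rw [← Real.log_div (by positivity) (by positivity)]
    calc Real.log ((1 + Real.exp (-s)) / (1 + Real.exp (-t)))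
        ≤ Real.log (Real.exp (t - s)) := by
          apply Real.log_le_log (by positivity)
          rw [div_le_iff₀ h1]
          have e1 : Real.exp (t-s) * Real.exp (-t) = Real.exp (-s) := by
            rw [← Real.exp_add]; ring_nf
          have e2 : (1:ℝ) ≤ Real.exp (t - s) := Real.one_le_exp (by linarith)
          nlinarith
      _ = t - s := Real.log_exp _
  have mono : ∀ s t : ℝ, s ≤ t →
      Real.log (1 + Real.exp (-t)) ≤ Real.log (1 + Real.exp (-s)) := by
    intro s t hst
    apply Real.log_le_log (by positivity)
    have := Real.exp_le_exp.mpr (neg_le_neg hst)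
    linarith
  rcases le_total a b with h | h
  · rw [abs_of_nonneg (by linarith [mono a b h]), abs_of_nonpos (by linarith)]
    have := key a b h; linarith
  · rw [abs_of_nonpos (by linarith [mono b a h]), abs_of_nonneg (by linarith)]
    have := key b a h; linarith

lemma quad_bound (D P Q m : ℝ) (hD : 0 < D) (hP : 0 ≤ P) (hQ : 0 ≤ Q) (hm : 0 ≤ m)
    (h : D * m ≤ P * Real.sqrt m + Q) :
    m ≤ (P/D)^2 + (P/D) * Real.sqrt (Q/D) + Q/D := by
  set s := Real.sqrt m with hs
  have hs2 : s^2 = m := Real.sq_sqrt hm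
  have hsn : 0 ≤ s := Real.sqrt_nonneg m
  set p := P / D with hp
  set r := Real.sqrt (Q/D) with hr
  have hpn : 0 ≤ p := by positivity
  have hrn : 0 ≤ r := Real.sqrt_nonneg _
  have hr2 : r^2 = Q/D := Real.sq_sqrt (by positivity)
  have key : s^2 ≤ p * s + Q/D := by
    rw [hs2, hp, div_mul_eq_mul_div, ← add_div, le_div_iff₀ hD, mul_comm]
    linarith [h]
  have hsle : s ≤ p + r := by
    by_contra hc
    push_neg at hc
    have hspos : 0 < s := lt_of_le_of_lt (by positivity) hc
    have h1 : r * r ≤ r * s :=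
      mul_le_mul_of_nonneg_left (le_of_lt (lt_of_le_of_lt (le_add_of_nonneg_left hpn) hc)) hrn
    have h2 : s * s ≤ p * s + r * r := by nlinarith [key, hr2]
    have h3 : (p + r) * s < s * s := mul_lt_mul_of_pos_right hc hspos
    nlinarith
  calc m = s ^ 2 := hs2.symm
    _ ≤ p * s + Q/D := key
    _ ≤ p * (p + r) + Q/D := by nlinarith
    _ = p^2 + p*r + Q/D := by ring

lemma rpow_three_halves (x : ℝ) (hx : 0 ≤ x) :
    x ^ ((1.5:ℝ)) = Real.sqrt (x^3) := by
  rw [Real.sqrt_eq_rpow, show (1.5:ℝ) = (3:ℝ) * (1/2 : ℝ) by norm_num, Real.rpow_mul hx,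
    show ((3:ℝ)) = ((3:ℕ):ℝ) by norm_num, Real.rpow_natCast]

end SGDAux

open SGDAux

/-- **Risk convergence of SGD for the cross entropy loss on linearly separable data.**
SGD run in epochs (each training point visited exactly once per epoch, in an arbitrary
order) on a two-layer leaky ReLU network reaches empirical cross-entropy loss `< ε`
within `M(n, ε)` updates. -/
theorem sgd_risk_convergence {d k n : ℕ} (hk : 1 ≤ k) (hn : 1 ≤ n)
    (α v η Rx R0 ε : ℝ)
    (hα0 : 0 < α) (hα1 : α < 1) (hv : 0 < v) (hη : 0 < η) (hRx : 0 < Rx)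
    (hR0 : 0 < R0) (hε : 0 < ε)
    (x : Fin n → EuclideanSpace ℝ (Fin d)) (y : Fin n → ℝ)
    (hy : ∀ i, y i = 1 ∨ y i = -1)
    (hxb : ∀ i, ‖x i‖ ≤ Rx)
    (wstar : EuclideanSpace ℝ (Fin d))
    (hsep : ∀ i, y i * ⟪wstar, x i⟫ ≥ 1)
    -- the order in which SGD visits the points: each point exactly once per epoch
    (idx : ℕ → Fin n)
    (hepoch : ∀ e : ℕ, Function.Bijective (fun h : Fin n => idx (e * n + h)))
    -- the SGD iterates
    (W U : ℕ → Fin k → EuclideanSpace ℝ (Fin d))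
    (hinitW : ∀ j, ‖W 0 j‖ ≤ R0) (hinitU : ∀ j, ‖U 0 j‖ ≤ R0)
    (hupdW : ∀ t : ℕ, ∀ j,
      W (t + 1) j = W t j +
        (η * v * y (idx t) *
          |lossD (y (idx t) * net α v (W t) (U t) (x (idx t)))| *
          lreluD α ⟪W t j, x (idx t)⟫) • x (idx t))
    (hupdU : ∀ t : ℕ, ∀ j,
      U (t + 1) j = U t j -
        (η * v * y (idx t) *
          |lossD (y (idx t) * net α v (W t) (U t) (x (idx t)))| *
          lreluD α ⟪U t j, x (idx t)⟫) • x (idx t)) :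
    ∃ t : ℕ,
      (t : ℝ) ≤
        (Rx ^ 2 / α ^ 2 + 1 / (k * η * v ^ 2 * α ^ 2)) * ‖wstar‖ ^ 2 * (n : ℝ) ^ 2 *
            (1 + 1 / (ε / (1 + 2 * v ^ 2 * Rx ^ 2 * η * k * n))) ^ 2 +
          Real.sqrt (R0 * (8 * k ^ 2 * η ^ 2 * v ^ 2 * Rx ^ 2 + 8 * k * η)) *
              ‖wstar‖ ^ ((1.5 : ℝ)) * (n : ℝ) ^ ((1.5 : ℝ)) *
              (1 + 1 / (ε / (1 + 2 * v ^ 2 * Rx ^ 2 * η * k * n))) ^ ((1.5 : ℝ)) /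
            (2 * k * (η * v * α) ^ ((1.5 : ℝ))) +
          2 * R0 * ‖wstar‖ * (n : ℝ) *
              (1 + 1 / (ε / (1 + 2 * v ^ 2 * Rx ^ 2 * η * k * n))) / (η * v * α) +
          (n : ℝ) ∧
      (1 / (n : ℝ)) * ∑ i, Real.log (1 + Real.exp (-(y i) * net α v (W t) (U t) (x i)))
        < ε := by
  -- basic positivity facts
  have hk' : (0:ℝ) < k := by exact_mod_cast Nat.lt_of_lt_of_le Nat.zero_lt_one hk
  have hn' : (0:ℝ) < n := by exact_mod_cast Nat.lt_of_lt_of_le Nat.zero_lt_one hn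
  have hy2 : ∀ i, (y i)^2 = 1 := by intro i; rcases hy i with h | h <;> rw [h] <;> norm_num
  have hyabs : ∀ i, |y i| = 1 := by intro i; rcases hy i with h | h <;> rw [h] <;> norm_num
  have hw : 0 < ‖wstar‖ := by
    rcases eq_or_lt_of_le (norm_nonneg wstar) with h | h
    · exfalso
      have hw0 : wstar = 0 := by rw [← norm_eq_zero]; exact h.symm
      have := hsep ⟨0, hn⟩
      rw [hw0] at this
      simp [inner_zero_left] at this
      linarith
    · exact h
  -- the small loss threshold and gradient threshold
  set ε₀ : ℝ := ε / (1 + 2 * v ^ 2 * Rx ^ 2 * η * (k:ℝ) * (n:ℝ)) with hε₀def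
  have hden : (0:ℝ) < 1 + 2 * v ^ 2 * Rx ^ 2 * η * (k:ℝ) * (n:ℝ) := by positivity
  have hε₀ : 0 < ε₀ := by rw [hε₀def]; positivity
  set b1 : ℝ := 1 + 1/ε₀ with hb1def
  have hb1 : 0 < b1 := by rw [hb1def]; positivity
  set β : ℝ := ε₀ / (1 + ε₀) with hβdef
  have hβ : 0 < β := by rw [hβdef]; positivity
  have hβb1 : β * b1 = 1 := by
    rw [hβdef, hb1def]; field_simp; ring
  -- abbreviations
  set q : ℕ → ℝ := fun t => y (idx t) * net α v (W t) (U t) (x (idx t)) with hqdef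
  set g : ℕ → ℝ := fun t => (1 + Real.exp (q t))⁻¹ with hgdef
  have hg0 : ∀ t, 0 < g t := by intro t; rw [hgdef]; positivity
  have hg1 : ∀ t, g t ≤ 1 := fun t => g_le_one (q t)
  have habs : ∀ t, |lossD (y (idx t) * net α v (W t) (U t) (x (idx t)))| = g t :=
    fun t => abs_lossD (q t)
  set F : ℕ → ℝ := fun t => (∑ j, ⟪W t j, wstar⟫) - ∑ j, ⟪U t j, wstar⟫ with hFdef
  set S : ℕ → ℝ := fun t => (∑ j, ‖W t j‖^2) + ∑ j, ‖U t j‖^2 with hSdef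
  -- one-step progress of F
  have hF : ∀ t, F t + 2*(k:ℝ)*α*(η*v*g t) ≤ F (t+1) := by
    intro t
    have hB : 1 ≤ y (idx t) * ⟪wstar, x (idx t)⟫ := hsep (idx t)
    have w1 : ∀ j, ⟪W (t+1) j, wstar⟫ = ⟪W t j, wstar⟫ +
        (η*v*g t) * (lreluD α ⟪W t j, x (idx t)⟫ * (y (idx t) * ⟪wstar, x (idx t)⟫)) := by
      intro j
      rw [hupdW t j, inner_add_left, real_inner_smul_left, habs t,
        real_inner_comm (x (idx t)) wstar]
      ring
    have u1 : ∀ j, ⟪U (t+1) j, wstar⟫ = ⟪U t j, wstar⟫ -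
        (η*v*g t) * (lreluD α ⟪U t j, x (idx t)⟫ * (y (idx t) * ⟪wstar, x (idx t)⟫)) := by
      intro j
      rw [hupdU t j, inner_sub_left, real_inner_smul_left, habs t,
        real_inner_comm (x (idx t)) wstar]
      ring
    have e1 : F (t+1) = F t +
        ((∑ j, (η*v*g t) * (lreluD α ⟪W t j, x (idx t)⟫ * (y (idx t) * ⟪wstar, x (idx t)⟫))) +
         (∑ j, (η*v*g t) * (lreluD α ⟪U t j, x (idx t)⟫ * (y (idx t) * ⟪wstar, x (idx t)⟫)))) := by
      rw [hFdef]
      simp only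
      rw [Finset.sum_congr rfl (fun j _ => w1 j), Finset.sum_congr rfl (fun j _ => u1 j),
        Finset.sum_add_distrib, Finset.sum_sub_distrib]
      ring
    rw [e1]
    have sum1 : ∀ (Z : ℕ → Fin k → EuclideanSpace ℝ (Fin d)),
        (k:ℝ)*((η*v*g t)*α) ≤
        ∑ j, (η*v*g t) * (lreluD α ⟪Z t j, x (idx t)⟫ * (y (idx t) * ⟪wstar, x (idx t)⟫)) := by
      intro Z
      calc (k:ℝ)*((η*v*g t)*α) = ∑ _j : Fin k, (η*v*g t)*α := by
            rw [Finset.sum_const, Finset.card_univ, Fintype.card_fin, nsmul_eq_mul]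
        _ ≤ _ := by
            apply Finset.sum_le_sum
            intro j _
            have hD := lreluD_bounds α ⟪Z t j, x (idx t)⟫ hα0 hα1
            have hstep : α ≤ lreluD α ⟪Z t j, x (idx t)⟫ * (y (idx t) * ⟪wstar, x (idx t)⟫) := by
              nlinarith [hD.1, hD.2]
            have hc : (0:ℝ) ≤ η*v*g t := by positivity
            exact mul_le_mul_of_nonneg_left hstep hc
    nlinarith [sum1 W, sum1 U]
  -- one-step growth of S
  have hS : ∀ t, S (t+1) ≤ S t + (2*η + 2*(k:ℝ)*(η^2*v^2*Rx^2)) := by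
    intro t
    have hxt : ‖x (idx t)‖ ≤ Rx := hxb (idx t)
    have w1 : ∀ j, ‖W (t+1) j‖^2 = ‖W t j‖^2 +
        2*(η*(g t)*(y (idx t)))*(v * lrelu α ⟪W t j, x (idx t)⟫) +
        (η*v*(y (idx t))*(g t)*lreluD α ⟪W t j, x (idx t)⟫)^2 * ‖x (idx t)‖^2 := by
      intro j
      rw [hupdW t j, habs t, norm_add_sq_real, real_inner_smul_right, norm_smul, mul_pow,
        Real.norm_eq_abs, sq_abs, ← lreluD_mul_self α ⟪W t j, x (idx t)⟫ hα1.le]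
      ring
    have u1 : ∀ j, ‖U (t+1) j‖^2 = ‖U t j‖^2 -
        2*(η*(g t)*(y (idx t)))*(v * lrelu α ⟪U t j, x (idx t)⟫) +
        (η*v*(y (idx t))*(g t)*lreluD α ⟪U t j, x (idx t)⟫)^2 * ‖x (idx t)‖^2 := by
      intro j
      rw [hupdU t j, habs t, norm_sub_sq_real, real_inner_smul_right, norm_smul, mul_pow,
        Real.norm_eq_abs, sq_abs, ← lreluD_mul_self α ⟪U t j, x (idx t)⟫ hα1.le]
      ring
    have e1 : S (t+1) = S t + 2*η*(g t * q t) +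
        ((∑ j, (η*v*(y (idx t))*(g t)*lreluD α ⟪W t j, x (idx t)⟫)^2 * ‖x (idx t)‖^2) +
         (∑ j, (η*v*(y (idx t))*(g t)*lreluD α ⟪U t j, x (idx t)⟫)^2 * ‖x (idx t)‖^2)) := by
      have pullW : ∑ j, 2*(η*(g t)*(y (idx t)))*(v * lrelu α ⟪W t j, x (idx t)⟫) =
          2*(η*(g t)*(y (idx t)))*v * ∑ j, lrelu α ⟪W t j, x (idx t)⟫ := by
        rw [Finset.mul_sum]
        exact Finset.sum_congr rfl (fun j _ => by ring)
      have pullU : ∑ j, 2*(η*(g t)*(y (idx t)))*(v * lrelu α ⟪U t j, x (idx t)⟫) =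
          2*(η*(g t)*(y (idx t)))*v * ∑ j, lrelu α ⟪U t j, x (idx t)⟫ := by
        rw [Finset.mul_sum]
        exact Finset.sum_congr rfl (fun j _ => by ring)
      rw [hSdef]
      simp only
      rw [Finset.sum_congr rfl (fun j _ => w1 j), Finset.sum_congr rfl (fun j _ => u1 j)]
      simp only [Finset.sum_add_distrib, Finset.sum_sub_distrib]
      rw [pullW, pullU]
      have hqe : q t = y (idx t) * (v * ∑ i, lrelu α ⟪W t i, x (idx t)⟫ -
          v * ∑ i, lrelu α ⟪U t i, x (idx t)⟫) := by
        simp only [hqdef]; rfl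
      rw [hqe]
      ring
    rw [e1]
    have hmid : 2*η*(g t * q t) ≤ 2*η := by
      have := g_mul_q_le_one (q t)
      have hgq : g t * q t ≤ 1 := by rw [hgdef]; simpa using this
      nlinarith
    have hquad : ∀ (Z : ℕ → Fin k → EuclideanSpace ℝ (Fin d)),
        (∑ j, (η*v*(y (idx t))*(g t)*lreluD α ⟪Z t j, x (idx t)⟫)^2 * ‖x (idx t)‖^2) ≤
        (k:ℝ) * (η^2*v^2*Rx^2) := by
      intro Z
      calc (∑ j, (η*v*(y (idx t))*(g t)*lreluD α ⟪Z t j, x (idx t)⟫)^2 * ‖x (idx t)‖^2)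
          ≤ ∑ _j : Fin k, η^2*v^2*Rx^2 := by
            apply Finset.sum_le_sum
            intro j _
            have hD := lreluD_bounds α ⟪Z t j, x (idx t)⟫ hα0 hα1
            have hg2 : (g t)^2 ≤ 1 := by nlinarith [hg0 t, hg1 t]
            have hsd : (lreluD α ⟪Z t j, x (idx t)⟫)^2 ≤ 1 := by nlinarith [hD.1, hD.2, hα0]
            have hx2 : ‖x (idx t)‖^2 ≤ Rx^2 := by
              nlinarith [norm_nonneg (x (idx t)), hxb (idx t)]
            calc (η*v*(y (idx t))*(g t)*lreluD α ⟪Z t j, x (idx t)⟫)^2 * ‖x (idx t)‖^2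
                = (η*v)^2 * (y (idx t))^2 *
                  ((g t)^2 * ((lreluD α ⟪Z t j, x (idx t)⟫)^2 * ‖x (idx t)‖^2)) := by ring
              _ ≤ (η*v)^2 * (y (idx t))^2 * (1 * (1 * Rx^2)) := by
                  apply mul_le_mul_of_nonneg_left _ (by positivity)
                  exact mul_le_mul hg2 (mul_le_mul hsd hx2 (sq_nonneg _) zero_le_one)
                    (by positivity) zero_le_one
              _ = η^2*v^2*Rx^2 := by rw [hy2 (idx t)]; ring
        _ = (k:ℝ) * (η^2*v^2*Rx^2) := by
            rw [Finset.sum_const, Finset.card_univ, Fintype.card_fin, nsmul_eq_mul]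
    nlinarith [hquad W, hquad U]
  -- one-step change of the network output
  have hNet : ∀ t (z : EuclideanSpace ℝ (Fin d)), ‖z‖ ≤ Rx →
      |net α v (W (t+1)) (U (t+1)) z - net α v (W t) (U t) z| ≤ 2*(k:ℝ)*(η*v^2*Rx^2)*(g t) := by
    intro t z hz
    have hxt : ‖x (idx t)‖ ≤ Rx := hxb (idx t)
    have key : ∀ (Z : ℕ → Fin k → EuclideanSpace ℝ (Fin d)) (c : Fin k → ℝ),
        (∀ j, |c j| ≤ η*v*g t) → (∀ j, Z (t+1) j = Z t j + (c j) • x (idx t)) →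
        ∀ j, |lrelu α ⟪Z (t+1) j, z⟫ - lrelu α ⟪Z t j, z⟫| ≤ η*v*(g t)*(Rx*Rx) := by
      intro Z c hc hZ j
      calc |lrelu α ⟪Z (t+1) j, z⟫ - lrelu α ⟪Z t j, z⟫|
          ≤ |⟪Z (t+1) j, z⟫ - ⟪Z t j, z⟫| := lrelu_lipschitz α _ _ hα0.le hα1.le
        _ = |c j| * |⟪x (idx t), z⟫| := by
            rw [hZ j, inner_add_left, real_inner_smul_left, add_sub_cancel_left, abs_mul]
        _ ≤ (η*v*g t) * (Rx*Rx) := by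
            apply mul_le_mul (hc j) ?_ (abs_nonneg _) (by positivity)
            calc |⟪x (idx t), z⟫| ≤ ‖x (idx t)‖ * ‖z‖ := abs_real_inner_le_norm _ _
              _ ≤ Rx * Rx := by
                  apply mul_le_mul hxt hz (norm_nonneg _) hRx.le
        _ = η*v*(g t)*(Rx*Rx) := by ring
    have hcW : ∀ j, |η * v * y (idx t) * g t * lreluD α ⟪W t j, x (idx t)⟫| ≤ η*v*g t := by
      intro j
      have hD := lreluD_bounds α ⟪W t j, x (idx t)⟫ hα0 hα1
      rw [abs_mul, abs_mul, abs_mul, abs_mul, hyabs (idx t)]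
      rw [abs_of_pos hη, abs_of_pos hv, abs_of_pos (hg0 t),
        abs_of_pos (lt_of_lt_of_le hα0 hD.1)]
      nlinarith [mul_le_mul_of_nonneg_left hD.2 (show (0:ℝ) ≤ η*v*1*g t by positivity)]
    have hcU : ∀ j, |-(η * v * y (idx t) * g t * lreluD α ⟪U t j, x (idx t)⟫)| ≤ η*v*g t := by
      intro j
      have hD := lreluD_bounds α ⟪U t j, x (idx t)⟫ hα0 hα1
      rw [abs_neg, abs_mul, abs_mul, abs_mul, abs_mul, hyabs (idx t)]
      rw [abs_of_pos hη, abs_of_pos hv, abs_of_pos (hg0 t),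
        abs_of_pos (lt_of_lt_of_le hα0 hD.1)]
      nlinarith [mul_le_mul_of_nonneg_left hD.2 (show (0:ℝ) ≤ η*v*1*g t by positivity)]
    have keyW := key W (fun j => η * v * y (idx t) * g t * lreluD α ⟪W t j, x (idx t)⟫)
      hcW (by intro j; rw [hupdW t j, habs t])
    have keyU := key U (fun j => -(η * v * y (idx t) * g t * lreluD α ⟪U t j, x (idx t)⟫))
      hcU (by intro j; rw [hupdU t j, habs t]; simp [sub_eq_add_neg])
    have eN : net α v (W (t+1)) (U (t+1)) z - net α v (W t) (U t) z =
        v * (∑ j, (lrelu α ⟪W (t+1) j, z⟫ - lrelu α ⟪W t j, z⟫)) -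
        v * (∑ j, (lrelu α ⟪U (t+1) j, z⟫ - lrelu α ⟪U t j, z⟫)) := by
      rw [show (net α v (W (t+1)) (U (t+1)) z) =
        v * ∑ i, lrelu α ⟪W (t+1) i, z⟫ - v * ∑ i, lrelu α ⟪U (t+1) i, z⟫ from rfl,
        show (net α v (W t) (U t) z) =
        v * ∑ i, lrelu α ⟪W t i, z⟫ - v * ∑ i, lrelu α ⟪U t i, z⟫ from rfl]
      rw [Finset.sum_sub_distrib, Finset.sum_sub_distrib]
      ring
    rw [eN]
    have habsW : |∑ j, (lrelu α ⟪W (t+1) j, z⟫ - lrelu α ⟪W t j, z⟫)| ≤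
        (k:ℝ) * (η*v*(g t)*(Rx*Rx)) := by
      calc |∑ j, (lrelu α ⟪W (t+1) j, z⟫ - lrelu α ⟪W t j, z⟫)|
          ≤ ∑ j, |lrelu α ⟪W (t+1) j, z⟫ - lrelu α ⟪W t j, z⟫| := Finset.abs_sum_le_sum_abs _ _
        _ ≤ ∑ _j : Fin k, η*v*(g t)*(Rx*Rx) := Finset.sum_le_sum (fun j _ => keyW j)
        _ = (k:ℝ) * (η*v*(g t)*(Rx*Rx)) := by
            rw [Finset.sum_const, Finset.card_univ, Fintype.card_fin, nsmul_eq_mul]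
    have habsU : |∑ j, (lrelu α ⟪U (t+1) j, z⟫ - lrelu α ⟪U t j, z⟫)| ≤
        (k:ℝ) * (η*v*(g t)*(Rx*Rx)) := by
      calc |∑ j, (lrelu α ⟪U (t+1) j, z⟫ - lrelu α ⟪U t j, z⟫)|
          ≤ ∑ j, |lrelu α ⟪U (t+1) j, z⟫ - lrelu α ⟪U t j, z⟫| := Finset.abs_sum_le_sum_abs _ _
        _ ≤ ∑ _j : Fin k, η*v*(g t)*(Rx*Rx) := Finset.sum_le_sum (fun j _ => keyU j)
        _ = (k:ℝ) * (η*v*(g t)*(Rx*Rx)) := by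
            rw [Finset.sum_const, Finset.card_univ, Fintype.card_fin, nsmul_eq_mul]
    calc |v * (∑ j, (lrelu α ⟪W (t+1) j, z⟫ - lrelu α ⟪W t j, z⟫)) -
        v * (∑ j, (lrelu α ⟪U (t+1) j, z⟫ - lrelu α ⟪U t j, z⟫))|
        ≤ |v * (∑ j, (lrelu α ⟪W (t+1) j, z⟫ - lrelu α ⟪W t j, z⟫))| +
          |v * (∑ j, (lrelu α ⟪U (t+1) j, z⟫ - lrelu α ⟪U t j, z⟫))| := abs_sub _ _
      _ ≤ v * ((k:ℝ) * (η*v*(g t)*(Rx*Rx))) + v * ((k:ℝ) * (η*v*(g t)*(Rx*Rx))) := by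
          rw [abs_mul, abs_mul, abs_of_pos hv]
          have h1 := mul_le_mul_of_nonneg_left habsW hv.le
          have h2 := mul_le_mul_of_nonneg_left habsU hv.le
          linarith
      _ = 2*(k:ℝ)*(η*v^2*Rx^2)*(g t) := by ring
  -- monotonicity of F
  have hgco : ∀ t, (0:ℝ) ≤ 2*(k:ℝ)*α*(η*v*g t) := fun t => by
    have := (hg0 t).le; positivity
  have hFmono : ∀ a b : ℕ, a ≤ b → F a ≤ F b := by
    intro a b hab
    induction b, hab using Nat.le_induction with
    | base => exact le_refl _
    | succ m hm ih => exact le_trans ih (le_trans (le_add_of_nonneg_right (hgco m)) (hF m))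
  -- growth of S
  have hSbound : ∀ t : ℕ, S t ≤ S 0 + t*(2*η + 2*(k:ℝ)*(η^2*v^2*Rx^2)) := by
    intro t
    induction t with
    | zero => simp
    | succ m ih =>
        have := hS m
        push_cast
        push_cast at ih
        linarith
  -- telescoped drift of the network outputs
  have hNtel : ∀ (z : EuclideanSpace ℝ (Fin d)), ‖z‖ ≤ Rx → ∀ a b : ℕ, a ≤ b →
      |net α v (W b) (U b) z - net α v (W a) (U a) z| ≤
      ∑ s ∈ Finset.Ico a b, 2*(k:ℝ)*(η*v^2*Rx^2)*(g s) := by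
    intro z hz a b hab
    induction b, hab using Nat.le_induction with
    | base => simp
    | succ m hm ih =>
        rw [Finset.sum_Ico_succ_top hm]
        have h1 := hNet m z hz
        have h2 := abs_sub_le (net α v (W (m+1)) (U (m+1)) z) (net α v (W m) (U m) z)
          (net α v (W a) (U a) z)
        have h3 : |net α v (W (m+1)) (U (m+1)) z - net α v (W m) (U m) z| =
            |net α v (W m) (U m) z - net α v (W (m+1)) (U (m+1)) z| := abs_sub_comm _ _
        linarith [abs_sub_le (net α v (W (m+1)) (U (m+1)) z) (net α v (W m) (U m) z)
          (net α v (W a) (U a) z)]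
  -- relation between ε₀ and ε
  have hεmul : ε₀ * (1 + 2*v^2*Rx^2*η*(k:ℝ)*(n:ℝ)) = ε := by
    rw [hε₀def]; field_simp
  -- if all per-step losses during an epoch are < ε₀, the loss at the end of the epoch is < ε
  have hEpoch : ∀ e : ℕ,
      (∀ t, e*n ≤ t → t < e*n + n → Real.log (1 + Real.exp (-(q t))) < ε₀) →
      (1 / (n : ℝ)) * ∑ i, Real.log (1 + Real.exp (-(y i) *
        net α v (W (e*n+n)) (U (e*n+n)) (x i))) < ε := by
    intro e hgood
    have hgs : ∀ t, e*n ≤ t → t < e*n+n → g t ≤ ε₀ := by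
      intro t h1 h2
      have := g_le_of_loss_lt (q t) ε₀ hε₀ (hgood t h1 h2)
      simpa [hgdef] using this
    have hpt : ∀ i : Fin n, Real.log (1 + Real.exp (-(y i) *
        net α v (W (e*n+n)) (U (e*n+n)) (x i))) < ε := by
      intro i
      obtain ⟨h, hh⟩ := (hepoch e).2 i
      have hh' : idx (e*n + (h:ℕ)) = i := hh
      have ht1 : e*n ≤ e*n + (h:ℕ) := Nat.le_add_right _ _
      have ht2 : e*n + (h:ℕ) < e*n + n := by have := h.isLt; omega
      have hvis : Real.log (1 + Real.exp (-(q (e*n + (h:ℕ))))) < ε₀ :=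
        hgood _ ht1 ht2
      have htel := hNtel (x i) (hxb i) (e*n + (h:ℕ)) (e*n+n) (le_of_lt ht2)
      have hsum : ∑ s ∈ Finset.Ico (e*n + (h:ℕ)) (e*n+n), 2*(k:ℝ)*(η*v^2*Rx^2)*(g s) ≤
          (n:ℝ) * (2*(k:ℝ)*(η*v^2*Rx^2)*ε₀) := by
        calc ∑ s ∈ Finset.Ico (e*n + (h:ℕ)) (e*n+n), 2*(k:ℝ)*(η*v^2*Rx^2)*(g s)
            ≤ ∑ _s ∈ Finset.Ico (e*n + (h:ℕ)) (e*n+n), 2*(k:ℝ)*(η*v^2*Rx^2)*ε₀ := by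
              apply Finset.sum_le_sum
              intro s hs
              rw [Finset.mem_Ico] at hs
              exact mul_le_mul_of_nonneg_left (hgs s (le_trans ht1 hs.1) hs.2)
                (by positivity)
          _ = ((e*n+n - (e*n + (h:ℕ)) : ℕ):ℝ) * (2*(k:ℝ)*(η*v^2*Rx^2)*ε₀) := by
              rw [Finset.sum_const, Nat.card_Ico, nsmul_eq_mul]
          _ ≤ (n:ℝ) * (2*(k:ℝ)*(η*v^2*Rx^2)*ε₀) := by
              apply mul_le_mul_of_nonneg_right _ (by positivity)
              have hle : e*n+n - (e*n + (h:ℕ)) ≤ n := by omega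
              exact_mod_cast hle
      have hq0 : q (e*n + (h:ℕ)) =
          y i * net α v (W (e*n + (h:ℕ))) (U (e*n + (h:ℕ))) (x i) := by
        simp only [hqdef]
        rw [hh']
      have hdiff : |y i * net α v (W (e*n+n)) (U (e*n+n)) (x i) - q (e*n + (h:ℕ))| ≤
          (n:ℝ)*(2*(k:ℝ)*(η*v^2*Rx^2)*ε₀) := by
        rw [hq0, show y i * net α v (W (e*n+n)) (U (e*n+n)) (x i) -
            y i * net α v (W (e*n + (h:ℕ))) (U (e*n + (h:ℕ))) (x i) =
            y i * (net α v (W (e*n+n)) (U (e*n+n)) (x i) -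
              net α v (W (e*n + (h:ℕ))) (U (e*n + (h:ℕ))) (x i)) from by ring,
          abs_mul, hyabs i, one_mul]
        exact le_trans htel hsum
      have hlip := loss_lipschitz (y i * net α v (W (e*n+n)) (U (e*n+n)) (x i))
        (q (e*n + (h:ℕ)))
      have hend : Real.log (1 + Real.exp (-(y i * net α v (W (e*n+n)) (U (e*n+n)) (x i)))) <
          ε₀ + (n:ℝ)*(2*(k:ℝ)*(η*v^2*Rx^2)*ε₀) := by
        have h4 := le_trans (le_abs_self _) hlip
        linarith [hvis, hdiff, h4]
      have heps : ε₀ + (n:ℝ)*(2*(k:ℝ)*(η*v^2*Rx^2)*ε₀) = ε := by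
        rw [← hεmul]; ring
      rw [show -(y i) * net α v (W (e*n+n)) (U (e*n+n)) (x i) =
        -(y i * net α v (W (e*n+n)) (U (e*n+n)) (x i)) from by ring]
      linarith
    have hne : (Finset.univ : Finset (Fin n)).Nonempty := ⟨⟨0, hn⟩, Finset.mem_univ _⟩
    have hsumlt : ∑ i, Real.log (1 + Real.exp (-(y i) *
        net α v (W (e*n+n)) (U (e*n+n)) (x i))) < ∑ _i : Fin n, ε :=
      Finset.sum_lt_sum_of_nonempty hne (fun i _ => hpt i)
    have hsc : ∑ _i : Fin n, ε = (n:ℝ) * ε := by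
      rw [Finset.sum_const, Finset.card_univ, Fintype.card_fin, nsmul_eq_mul]
    have h5 : (0:ℝ) < 1/(n:ℝ) := by positivity
    calc (1 / (n : ℝ)) * ∑ i, Real.log (1 + Real.exp (-(y i) *
          net α v (W (e*n+n)) (U (e*n+n)) (x i)))
        < (1 / (n : ℝ)) * ((n:ℝ) * ε) := by
          apply mul_lt_mul_of_pos_left _ h5
          rw [← hsc]; exact hsumlt
      _ = ε := by field_simp
  -- bound on the initial norms and F 0
  have hS0 : S 0 ≤ 2*(k:ℝ)*R0^2 := by
    rw [hSdef]
    simp only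
    have hW0 : ∑ j, ‖W 0 j‖^2 ≤ (k:ℝ)*R0^2 := by
      calc ∑ j, ‖W 0 j‖^2 ≤ ∑ _j : Fin k, R0^2 :=
            Finset.sum_le_sum (fun j _ => pow_le_pow_left₀ (norm_nonneg _) (hinitW j) 2)
        _ = (k:ℝ)*R0^2 := by
            rw [Finset.sum_const, Finset.card_univ, Fintype.card_fin, nsmul_eq_mul]
    have hU0 : ∑ j, ‖U 0 j‖^2 ≤ (k:ℝ)*R0^2 := by
      calc ∑ j, ‖U 0 j‖^2 ≤ ∑ _j : Fin k, R0^2 :=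
            Finset.sum_le_sum (fun j _ => pow_le_pow_left₀ (norm_nonneg _) (hinitU j) 2)
        _ = (k:ℝ)*R0^2 := by
            rw [Finset.sum_const, Finset.card_univ, Fintype.card_fin, nsmul_eq_mul]
    linarith
  have hF0 : -F 0 ≤ 2*(k:ℝ)*R0*‖wstar‖ := by
    rw [hFdef]
    simp only
    have hW0 : -∑ j, ⟪W 0 j, wstar⟫ ≤ (k:ℝ)*(R0*‖wstar‖) := by
      rw [← Finset.sum_neg_distrib]
      calc ∑ j, -⟪W 0 j, wstar⟫ ≤ ∑ _j : Fin k, R0*‖wstar‖ := by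
            apply Finset.sum_le_sum
            intro j _
            have h1 := (neg_le_abs _).trans (abs_real_inner_le_norm (W 0 j) wstar)
            have h2 : ‖W 0 j‖*‖wstar‖ ≤ R0*‖wstar‖ :=
              mul_le_mul_of_nonneg_right (hinitW j) (norm_nonneg _)
            linarith
        _ = (k:ℝ)*(R0*‖wstar‖) := by
            rw [Finset.sum_const, Finset.card_univ, Fintype.card_fin, nsmul_eq_mul]
    have hU0 : ∑ j, ⟪U 0 j, wstar⟫ ≤ (k:ℝ)*(R0*‖wstar‖) := by
      calc ∑ j, ⟪U 0 j, wstar⟫ ≤ ∑ _j : Fin k, R0*‖wstar‖ := by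
            apply Finset.sum_le_sum
            intro j _
            have h1 := real_inner_le_norm (U 0 j) wstar
            have h2 : ‖U 0 j‖*‖wstar‖ ≤ R0*‖wstar‖ :=
              mul_le_mul_of_nonneg_right (hinitU j) (norm_nonneg _)
            linarith
        _ = (k:ℝ)*(R0*‖wstar‖) := by
            rw [Finset.sum_const, Finset.card_univ, Fintype.card_fin, nsmul_eq_mul]
    linarith
  -- Cauchy-Schwarz bound on F
  have hFup : ∀ t : ℕ, F t ≤ ‖wstar‖ * (Real.sqrt (2*(k:ℝ)) * Real.sqrt (S t)) := by
    intro t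
    have hWs : ∑ j, ⟪W t j, wstar⟫ ≤ ∑ j, ‖W t j‖ * ‖wstar‖ :=
      Finset.sum_le_sum (fun j _ => real_inner_le_norm _ _)
    have hUs : - ∑ j, ⟪U t j, wstar⟫ ≤ ∑ j, ‖U t j‖ * ‖wstar‖ := by
      rw [← Finset.sum_neg_distrib]
      exact Finset.sum_le_sum
        (fun j _ => (neg_le_abs _).trans (abs_real_inner_le_norm _ _))
    have hsumW := sum_le_sqrt_card_mul (fun j => ‖W t j‖)
    have hsumU := sum_le_sqrt_card_mul (fun j => ‖U t j‖)
    have hcomb : Real.sqrt (∑ j, ‖W t j‖^2) + Real.sqrt (∑ j, ‖U t j‖^2) ≤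
        Real.sqrt 2 * Real.sqrt (S t) := by
      have h0 : S t = (∑ j, ‖W t j‖^2) + ∑ j, ‖U t j‖^2 := rfl
      rw [h0]
      have hA : (0:ℝ) ≤ ∑ j, ‖W t j‖^2 := Finset.sum_nonneg (fun j _ => sq_nonneg _)
      have hB : (0:ℝ) ≤ ∑ j, ‖U t j‖^2 := Finset.sum_nonneg (fun j _ => sq_nonneg _)
      exact sqrt_add_sqrt_le _ _ hA hB
    have hk0 : (0:ℝ) ≤ Real.sqrt (k:ℝ) := Real.sqrt_nonneg _
    have e2 : Real.sqrt (2*(k:ℝ)) = Real.sqrt 2 * Real.sqrt (k:ℝ) :=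
      Real.sqrt_mul (by norm_num) _
    calc F t ≤ (∑ j, ‖W t j‖) * ‖wstar‖ + (∑ j, ‖U t j‖) * ‖wstar‖ := by
          rw [hFdef]
          simp only
          rw [Finset.sum_mul, Finset.sum_mul]
          linarith [hWs, hUs]
      _ = ((∑ j, ‖W t j‖) + (∑ j, ‖U t j‖)) * ‖wstar‖ := by ring
      _ ≤ (Real.sqrt (k:ℝ) * (Real.sqrt (∑ j, ‖W t j‖^2) +
            Real.sqrt (∑ j, ‖U t j‖^2))) * ‖wstar‖ := by
          apply mul_le_mul_of_nonneg_right _ (norm_nonneg _)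
          have h1 := hsumW
          have h2 := hsumU
          nlinarith [h1, h2]
      _ ≤ (Real.sqrt (k:ℝ) * (Real.sqrt 2 * Real.sqrt (S t))) * ‖wstar‖ := by
          apply mul_le_mul_of_nonneg_right _ (norm_nonneg _)
          exact mul_le_mul_of_nonneg_left hcomb hk0
      _ = ‖wstar‖ * (Real.sqrt (2*(k:ℝ)) * Real.sqrt (S t)) := by rw [e2]; ring
  -- abbreviations for the final bound
  set c₂ : ℝ := 2*η + 2*(k:ℝ)*(η^2*v^2*Rx^2) with hc₂def
  have hc2pos : 0 < c₂ := by
    have h1 : (0:ℝ) ≤ 2*(k:ℝ)*(η^2*v^2*Rx^2) := by positivity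
    rw [hc₂def]; linarith
  set P : ℝ := ‖wstar‖ * Real.sqrt (2*(k:ℝ)) * Real.sqrt (c₂*(n:ℝ)) with hPdef
  set Q : ℝ := 4*(k:ℝ)*R0*‖wstar‖ with hQdef
  set D0 : ℝ := 2*(k:ℝ)*α*(η*v*β) with hD0def
  have hD0pos : 0 < D0 := by
    rw [hD0def]
    exact mul_pos (mul_pos (by linarith [hk'] : (0:ℝ) < 2*(k:ℝ)) hα0)
      (mul_pos (mul_pos hη hv) hβ)
  have hPpos : 0 ≤ P := by
    rw [hPdef]
    have := Real.sqrt_nonneg (2*(k:ℝ))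
    have := Real.sqrt_nonneg (c₂*(n:ℝ))
    positivity
  have hQpos : 0 ≤ Q := by
    rw [hQdef]
    have := hR0.le
    positivity
  -- main contradiction
  by_contra hcon
  push_neg at hcon
  -- the numerical bound in the statement
  set Mb : ℝ := (Rx ^ 2 / α ^ 2 + 1 / (k * η * v ^ 2 * α ^ 2)) * ‖wstar‖ ^ 2 * (n : ℝ) ^ 2 *
      b1 ^ 2 +
    Real.sqrt (R0 * (8 * k ^ 2 * η ^ 2 * v ^ 2 * Rx ^ 2 + 8 * k * η)) *
        ‖wstar‖ ^ ((1.5 : ℝ)) * (n : ℝ) ^ ((1.5 : ℝ)) * b1 ^ ((1.5 : ℝ)) /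
      (2 * k * (η * v * α) ^ ((1.5 : ℝ))) +
    2 * R0 * ‖wstar‖ * (n : ℝ) * b1 / (η * v * α) + (n : ℝ) with hMbdef
  have hrad : (0:ℝ) ≤ R0 * (8 * k ^ 2 * η ^ 2 * v ^ 2 * Rx ^ 2 + 8 * k * η) := by
    have h8 : (0:ℝ) ≤ 8 * k ^ 2 * η ^ 2 * v ^ 2 * Rx ^ 2 := by positivity
    have h9 : (0:ℝ) ≤ 8 * (k:ℝ) * η := by positivity
    nlinarith [hR0.le]
  have hMn : (n:ℝ) ≤ Mb := by
    rw [hMbdef]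
    have ht1 : (0:ℝ) ≤ (Rx ^ 2 / α ^ 2 + 1 / (k * η * v ^ 2 * α ^ 2)) * ‖wstar‖ ^ 2 *
        (n : ℝ) ^ 2 * b1 ^ 2 := by
      have hd1 : (0:ℝ) ≤ Rx ^ 2 / α ^ 2 := by positivity
      have hd2 : (0:ℝ) ≤ 1 / ((k:ℝ) * η * v ^ 2 * α ^ 2) := by positivity
      positivity
    have ht2 : (0:ℝ) ≤ Real.sqrt (R0 * (8 * k ^ 2 * η ^ 2 * v ^ 2 * Rx ^ 2 + 8 * k * η)) *
        ‖wstar‖ ^ ((1.5 : ℝ)) * (n : ℝ) ^ ((1.5 : ℝ)) * b1 ^ ((1.5 : ℝ)) /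
        (2 * k * (η * v * α) ^ ((1.5 : ℝ))) := by
      apply div_nonneg
      · exact mul_nonneg (mul_nonneg (mul_nonneg (Real.sqrt_nonneg _)
          (Real.rpow_nonneg (norm_nonneg _) _)) (Real.rpow_nonneg (Nat.cast_nonneg n) _))
          (Real.rpow_nonneg hb1.le _)
      · exact mul_nonneg (by positivity) (Real.rpow_nonneg (by positivity) _)
    have ht3 : (0:ℝ) ≤ 2 * R0 * ‖wstar‖ * (n : ℝ) * b1 / (η * v * α) := by
      apply div_nonneg _ (by positivity)
      have := hb1.le
      have := hR0.le
      positivity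
    linarith
  have hMb0 : (0:ℝ) ≤ Mb := le_trans hn'.le hMn
  set E : ℕ := Nat.floor (Mb / (n:ℝ)) with hEdef
  have hEle : (E:ℝ) * (n:ℝ) ≤ Mb := by
    have h1 : (E:ℝ) ≤ Mb / (n:ℝ) := Nat.floor_le (by positivity)
    calc (E:ℝ)*(n:ℝ) ≤ (Mb/(n:ℝ))*(n:ℝ) := mul_le_mul_of_nonneg_right h1 hn'.le
      _ = Mb := by field_simp
  have hMblt : Mb < ((E:ℝ)+1) * (n:ℝ) := by
    have h2 : Mb / (n:ℝ) < (E:ℝ)+1 := Nat.lt_floor_add_one _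
    calc Mb = (Mb/(n:ℝ))*(n:ℝ) := by field_simp
      _ < ((E:ℝ)+1)*(n:ℝ) := mul_lt_mul_of_pos_right h2 hn'
  -- each epoch whose end is within the budget must contain a large-gradient step
  have hbig : ∀ e : ℕ, e < E → ∃ t : ℕ, e*n ≤ t ∧ t < e*n + n ∧ β ≤ g t := by
    intro e he
    by_contra hno
    push_neg at hno
    have hgood : ∀ t, e*n ≤ t → t < e*n + n → Real.log (1 + Real.exp (-(q t))) < ε₀ := by
      intro t h1 h2
      by_contra hge
      push_neg at hge
      have hgg := g_ge_of_loss_ge (q t) ε₀ hε₀ hge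
      have hlt := hno t h1 h2
      rw [hβdef] at hlt
      have hgg' : ε₀/(1+ε₀) ≤ g t := by simpa [hgdef] using hgg
      linarith
    have hL := hEpoch e hgood
    have hcast : ((e*n+n : ℕ):ℝ) ≤ Mb := by
      push_cast
      have he' : (e:ℝ)+1 ≤ (E:ℝ) := by exact_mod_cast Nat.succ_le_of_lt he
      calc (e:ℝ)*(n:ℝ) + (n:ℝ) = ((e:ℝ)+1)*(n:ℝ) := by ring
        _ ≤ (E:ℝ)*(n:ℝ) := mul_le_mul_of_nonneg_right he' hn'.le
        _ ≤ Mb := hEle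
    exact absurd hL (not_lt.mpr (hcon (e*n+n) hcast))
  -- accumulation of F over the epochs
  have hFacc : ∀ e : ℕ, e ≤ E → F 0 + (e:ℝ) * D0 ≤ F (e*n) := by
    intro e he
    induction e with
    | zero => rw [Nat.zero_mul]; norm_num
    | succ m ih =>
        have hmE : m < E := Nat.lt_of_succ_le he
        obtain ⟨t0, ht1, ht2, htβ⟩ := hbig m hmE
        have ihm := ih (le_of_lt hmE)
        have hstep := hF t0
        have hmono1 : F (m*n) ≤ F t0 := hFmono _ _ ht1
        have hmul : (m+1)*n = m*n + n := by ring
        have hmono2 : F (t0+1) ≤ F ((m+1)*n) := by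
          rw [hmul]; exact hFmono _ _ (Nat.succ_le_of_lt ht2)
        have hgβ : D0 ≤ 2*(k:ℝ)*α*(η*v*g t0) := by
          rw [hD0def]
          have h1 : η*v*β ≤ η*v*g t0 :=
            mul_le_mul_of_nonneg_left htβ (le_of_lt (mul_pos hη hv))
          have h2 : (0:ℝ) ≤ 2*(k:ℝ)*α := by positivity
          exact mul_le_mul_of_nonneg_left h1 h2
        push_cast
        push_cast at ihm
        linarith
  -- the master inequality
  have hchain : D0 * (E:ℝ) ≤ P * Real.sqrt (E:ℝ) + Q := by
    have hacc := hFacc E le_rfl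
    have hup := hFup (E*n)
    have hST : S (E*n) ≤ 2*(k:ℝ)*R0^2 + ((E:ℝ)*(n:ℝ))*c₂ := by
      have h1 := hSbound (E*n)
      have h2 : ((E*n : ℕ):ℝ) = (E:ℝ)*(n:ℝ) := by push_cast; ring
      rw [h2] at h1
      linarith [hS0]
    have hsq1 : Real.sqrt (S (E*n)) ≤
        Real.sqrt (2*(k:ℝ)*R0^2 + ((E:ℝ)*(n:ℝ))*c₂) := Real.sqrt_le_sqrt hST
    have hsq2 : Real.sqrt (2*(k:ℝ)*R0^2 + ((E:ℝ)*(n:ℝ))*c₂) ≤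
        Real.sqrt (2*(k:ℝ)*R0^2) + Real.sqrt (((E:ℝ)*(n:ℝ))*c₂) :=
      sqrt_add_le _ _ (by positivity)
        (mul_nonneg (by positivity) hc2pos.le)
    have hsq3 : Real.sqrt (2*(k:ℝ)*R0^2) = Real.sqrt (2*(k:ℝ)) * R0 := by
      rw [Real.sqrt_mul (by positivity), Real.sqrt_sq hR0.le]
    have hsq4 : Real.sqrt (((E:ℝ)*(n:ℝ))*c₂) = Real.sqrt (c₂*(n:ℝ)) * Real.sqrt (E:ℝ) := by
      rw [show ((E:ℝ)*(n:ℝ))*c₂ = (c₂*(n:ℝ))*(E:ℝ) by ring,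
        Real.sqrt_mul (mul_nonneg hc2pos.le (Nat.cast_nonneg n))]
    have h2k : Real.sqrt (2*(k:ℝ)) * Real.sqrt (2*(k:ℝ)) = 2*(k:ℝ) :=
      Real.mul_self_sqrt (by positivity)
    have hsn : Real.sqrt (S (E*n)) ≤ Real.sqrt (2*(k:ℝ)) * R0 +
        Real.sqrt (c₂*(n:ℝ)) * Real.sqrt (E:ℝ) := by
      rw [← hsq3, ← hsq4]
      exact le_trans hsq1 hsq2
    have hupper : F (E*n) ≤ ‖wstar‖ * (Real.sqrt (2*(k:ℝ)) *
        (Real.sqrt (2*(k:ℝ)) * R0 + Real.sqrt (c₂*(n:ℝ)) * Real.sqrt (E:ℝ))) := by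
      calc F (E*n) ≤ ‖wstar‖ * (Real.sqrt (2*(k:ℝ)) * Real.sqrt (S (E*n))) := hup
        _ ≤ _ := by
            apply mul_le_mul_of_nonneg_left _ (norm_nonneg _)
            exact mul_le_mul_of_nonneg_left hsn (Real.sqrt_nonneg _)
    have hexp : ‖wstar‖ * (Real.sqrt (2*(k:ℝ)) *
        (Real.sqrt (2*(k:ℝ)) * R0 + Real.sqrt (c₂*(n:ℝ)) * Real.sqrt (E:ℝ))) =
        2*(k:ℝ)*R0*‖wstar‖ + P * Real.sqrt (E:ℝ) := by
      rw [hPdef]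
      linear_combination ‖wstar‖ * R0 * h2k
    rw [hexp] at hupper
    rw [hQdef]
    linarith [hacc, hupper, hF0]
  -- the quadratic bound on the number of epochs
  have hEB : (E:ℝ) ≤ (P/D0)^2 + (P/D0) * Real.sqrt (Q/D0) + Q/D0 :=
    quad_bound D0 P Q (E:ℝ) hD0pos hPpos hQpos (Nat.cast_nonneg E) hchain
  -- nonzero facts for field_simp
  have hαne : α ≠ 0 := hα0.ne'
  have hηne : η ≠ 0 := hη.ne'
  have hvne : v ≠ 0 := hv.ne'
  have hkne : (k:ℝ) ≠ 0 := hk'.ne'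
  have hnne : (n:ℝ) ≠ 0 := hn'.ne'
  have hb1ne : b1 ≠ 0 := hb1.ne'
  have hβeq : β = 1/b1 := by
    rw [eq_div_iff hb1ne]
    exact hβb1
  have hc2n : (0:ℝ) ≤ c₂*(n:ℝ) := mul_nonneg hc2pos.le (Nat.cast_nonneg n)
  have hP2 : P^2 = ‖wstar‖^2*((2*(k:ℝ))*(c₂*(n:ℝ))) := by
    rw [hPdef, mul_pow, mul_pow, Real.sq_sqrt (by positivity : (0:ℝ) ≤ 2*(k:ℝ)),
      Real.sq_sqrt hc2n]
    ring
  -- the three pieces of the final bound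
  have eq1 : (P/D0)^2 * (n:ℝ) =
      (Rx ^ 2 / α ^ 2 + 1 / (k * η * v ^ 2 * α ^ 2)) * ‖wstar‖ ^ 2 * (n : ℝ) ^ 2 * b1 ^ 2 := by
    rw [div_pow, hP2, hD0def, hβeq, hc₂def]
    field_simp
    ring
  have eq3 : (Q/D0) * (n:ℝ) = 2 * R0 * ‖wstar‖ * (n : ℝ) * b1 / (η * v * α) := by
    rw [hQdef, hD0def, hβeq]
    field_simp
    ring
  have hηvα : (0:ℝ) < η*v*α := mul_pos (mul_pos hη hv) hα0
  have hLHSnn : (0:ℝ) ≤ (P/D0) * Real.sqrt (Q/D0) * (n:ℝ) :=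
    mul_nonneg (mul_nonneg (div_nonneg hPpos hD0pos.le) (Real.sqrt_nonneg _))
      (Nat.cast_nonneg n)
  have hRHSnn : (0:ℝ) ≤ Real.sqrt (R0 * (8 * k ^ 2 * η ^ 2 * v ^ 2 * Rx ^ 2 + 8 * k * η)) *
      ‖wstar‖ ^ ((1.5 : ℝ)) * (n : ℝ) ^ ((1.5 : ℝ)) * b1 ^ ((1.5 : ℝ)) /
      (2 * k * (η * v * α) ^ ((1.5 : ℝ))) := by
    apply div_nonneg
    · exact mul_nonneg (mul_nonneg (mul_nonneg (Real.sqrt_nonneg _)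
        (Real.rpow_nonneg (norm_nonneg _) _)) (Real.rpow_nonneg (Nat.cast_nonneg n) _))
        (Real.rpow_nonneg hb1.le _)
    · exact mul_nonneg (by positivity) (Real.rpow_nonneg hηvα.le _)
  have hsq : ((P/D0) * Real.sqrt (Q/D0) * (n:ℝ))^2 =
      (Real.sqrt (R0 * (8 * k ^ 2 * η ^ 2 * v ^ 2 * Rx ^ 2 + 8 * k * η)) *
        ‖wstar‖ ^ ((1.5 : ℝ)) * (n : ℝ) ^ ((1.5 : ℝ)) * b1 ^ ((1.5 : ℝ)) /
        (2 * k * (η * v * α) ^ ((1.5 : ℝ))))^2 := by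
    rw [rpow_three_halves _ (norm_nonneg wstar), rpow_three_halves _ (Nat.cast_nonneg n),
      rpow_three_halves _ hb1.le, rpow_three_halves _ hηvα.le]
    simp only [mul_pow, div_pow]
    rw [Real.sq_sqrt (div_nonneg hQpos hD0pos.le),
      Real.sq_sqrt hrad,
      Real.sq_sqrt (pow_nonneg (norm_nonneg wstar) 3),
      Real.sq_sqrt (pow_nonneg (Nat.cast_nonneg n) 3),
      Real.sq_sqrt (pow_nonneg hb1.le 3),
      Real.sq_sqrt (by positivity : (0:ℝ) ≤ η^3*v^3*α^3)]
    rw [hP2, hQdef, hD0def, hβeq, hc₂def]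
    field_simp
    ring
  have eq2 : (P/D0) * Real.sqrt (Q/D0) * (n:ℝ) =
      Real.sqrt (R0 * (8 * k ^ 2 * η ^ 2 * v ^ 2 * Rx ^ 2 + 8 * k * η)) *
        ‖wstar‖ ^ ((1.5 : ℝ)) * (n : ℝ) ^ ((1.5 : ℝ)) * b1 ^ ((1.5 : ℝ)) /
        (2 * k * (η * v * α) ^ ((1.5 : ℝ))) := by
    have h1 := congrArg Real.sqrt hsq
    rwa [Real.sqrt_sq hLHSnn, Real.sqrt_sq hRHSnn] at h1
  -- wrap up
  have hfin : ((E:ℝ)+1)*(n:ℝ) ≤ Mb := by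
    rw [hMbdef]
    have hBn := mul_le_mul_of_nonneg_right hEB hn'.le
    linarith [hBn, eq1, eq2, eq3]
  exact absurd (lt_of_lt_of_le hMblt hfin) (lt_irrefl Mb)
end

section
/- Consider one SGD step on a point (x_t, y_t) with ‖x_t‖ ≤ R_x: w_t^(j) = w_{t−1}^(j) + η v y_t |ℓ'(y_t N_{θ_{t−1}}(x_t))| σ'(w_{t−1}^(j)·x_t) x_t and u_t^(j) = u_{t−1}^(j) − η v y_t |ℓ'(y_t N_{θ_{t−1}}(x_t))| σ'(u_{t−1}^(j)·x_t) x_t for all j, where σ'(z) = 1 for z > 0 and σ'(z) = α for z ≤ 0. Define G(W_t)² = Σ_{j=1}^k ‖w_t^(j)‖² + Σ_{j=1}^k ‖u_t^(j)‖². Then G(W_t)² ≤ G(W_{t−1})² + 2η·|ℓ'(y_t N_{θ_{t−1}}(x_t))|·y_t N_{θ_{t−1}}(x_t) + 2kη²v²R_x²·|ℓ'(y_t N_{θ_{t−1}}(x_t))|², and consequently G(W_t)² ≤ G(W_{t−1})² + 2η + 2kη²v²R_x². -/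
open scoped RealInnerProductSpace BigOperators

set_option maxHeartbeats 1000000 in
/-- One SGD step: recursive upper bound on the squared norm `G(W_t)²` of the
concatenated weights. -/
theorem G_recursion {d k : ℕ} (hk : 1 ≤ k) (α v η Rx : ℝ)
    (hα0 : 0 < α) (hα1 : α < 1) (hv : 0 < v) (hη : 0 < η) (hRx : 0 < Rx)
    (wPrev uPrev wNew uNew : Fin k → EuclideanSpace ℝ (Fin d))
    (xt : EuclideanSpace ℝ (Fin d)) (yt : ℝ)
    (hyt : yt = 1 ∨ yt = -1) (hxt : ‖xt‖ ≤ Rx)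
    (hupdW : ∀ j, wNew j = wPrev j +
      (η * v * yt * |lossD (yt * net α v wPrev uPrev xt)| * lreluD α ⟪wPrev j, xt⟫) • xt)
    (hupdU : ∀ j, uNew j = uPrev j -
      (η * v * yt * |lossD (yt * net α v wPrev uPrev xt)| * lreluD α ⟪uPrev j, xt⟫) • xt) :
    (∑ j, ‖wNew j‖ ^ 2 + ∑ j, ‖uNew j‖ ^ 2 ≤
      (∑ j, ‖wPrev j‖ ^ 2 + ∑ j, ‖uPrev j‖ ^ 2) +
        2 * η * |lossD (yt * net α v wPrev uPrev xt)| * (yt * net α v wPrev uPrev xt) +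
        2 * k * η ^ 2 * v ^ 2 * Rx ^ 2 * |lossD (yt * net α v wPrev uPrev xt)| ^ 2) ∧
    (∑ j, ‖wNew j‖ ^ 2 + ∑ j, ‖uNew j‖ ^ 2 ≤
      (∑ j, ‖wPrev j‖ ^ 2 + ∑ j, ‖uPrev j‖ ^ 2) + 2 * η + 2 * k * η ^ 2 * v ^ 2 * Rx ^ 2) := by
  set q : ℝ := yt * net α v wPrev uPrev xt with hq
  set L : ℝ := |lossD q| with hLdef
  have hL0 : 0 ≤ L := abs_nonneg _
  have hepos : (0:ℝ) < 1 + Real.exp q := by positivity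
  have hLval : L = (1 + Real.exp q)⁻¹ := by
    rw [hLdef]; unfold lossD
    rw [abs_neg, abs_inv, abs_of_pos hepos]
  have hL1 : L ≤ 1 := by
    rw [hLval]
    exact inv_le_one_of_one_le₀ (by nlinarith [Real.exp_pos q])
  have hLq : L * q ≤ 1 := by
    rw [hLval, inv_mul_le_iff₀ hepos]
    nlinarith [Real.add_one_le_exp q]
  have hy2 : yt ^ 2 = 1 := by rcases hyt with h | h <;> rw [h] <;> norm_num
  have hx0 : (0:ℝ) ≤ ‖xt‖ := norm_nonneg _
  have hx2 : ‖xt‖ ^ 2 ≤ Rx ^ 2 := by nlinarith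
  have hkey : ∀ z : ℝ, lreluD α z * z = lrelu α z := by
    intro z
    unfold lreluD lrelu
    split_ifs with h
    · rw [one_mul, max_eq_left (by nlinarith)]
    · push_neg at h
      rw [max_eq_right (by nlinarith)]
  have hD0 : ∀ z : ℝ, 0 ≤ lreluD α z := by
    intro z; unfold lreluD; split_ifs <;> linarith
  have hD1 : ∀ z : ℝ, lreluD α z ≤ 1 := by
    intro z; unfold lreluD; split_ifs <;> linarith
  have hwj : ∀ j, ‖wNew j‖ ^ 2 ≤ ‖wPrev j‖ ^ 2
      + 2 * η * v * yt * L * lrelu α ⟪wPrev j, xt⟫ + η ^ 2 * v ^ 2 * Rx ^ 2 * L ^ 2 := by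
    intro j
    have he : ‖wNew j‖ ^ 2 = ‖wPrev j‖ ^ 2
        + 2 * (η * v * yt * L * lreluD α ⟪wPrev j, xt⟫) * ⟪wPrev j, xt⟫
        + (η * v * yt * L * lreluD α ⟪wPrev j, xt⟫) ^ 2 * ‖xt‖ ^ 2 := by
      rw [hupdW j, @norm_add_sq_real, real_inner_smul_right, norm_smul]
      simp only [Real.norm_eq_abs, mul_pow, sq_abs]
      ring
    have hlin : 2 * (η * v * yt * L * lreluD α ⟪wPrev j, xt⟫) * ⟪wPrev j, xt⟫
        = 2 * η * v * yt * L * lrelu α ⟪wPrev j, xt⟫ := by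
      rw [← hkey ⟪wPrev j, xt⟫]; ring
    rw [he, hlin]
    have hDq : lreluD α ⟪wPrev j, xt⟫ ^ 2 ≤ 1 := by
      nlinarith [hD0 ⟪wPrev j, xt⟫, hD1 ⟪wPrev j, xt⟫]
    have hXD : lreluD α ⟪wPrev j, xt⟫ ^ 2 * ‖xt‖ ^ 2 ≤ Rx ^ 2 := by
      nlinarith [sq_nonneg ‖xt‖]
    have e : (η * v * yt * L * lreluD α ⟪wPrev j, xt⟫) ^ 2 * ‖xt‖ ^ 2
        = (η * v * L) ^ 2 * (lreluD α ⟪wPrev j, xt⟫ ^ 2 * ‖xt‖ ^ 2) * yt ^ 2 := by ring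
    rw [e, hy2, mul_one]
    nlinarith [mul_le_mul_of_nonneg_left hXD (sq_nonneg (η * v * L))]
  have huj : ∀ j, ‖uNew j‖ ^ 2 ≤ ‖uPrev j‖ ^ 2
      - 2 * η * v * yt * L * lrelu α ⟪uPrev j, xt⟫ + η ^ 2 * v ^ 2 * Rx ^ 2 * L ^ 2 := by
    intro j
    have he : ‖uNew j‖ ^ 2 = ‖uPrev j‖ ^ 2
        - 2 * (η * v * yt * L * lreluD α ⟪uPrev j, xt⟫) * ⟪uPrev j, xt⟫
        + (η * v * yt * L * lreluD α ⟪uPrev j, xt⟫) ^ 2 * ‖xt‖ ^ 2 := by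
      rw [hupdU j, @norm_sub_sq_real, real_inner_smul_right, norm_smul]
      simp only [Real.norm_eq_abs, mul_pow, sq_abs]
      ring
    have hlin : 2 * (η * v * yt * L * lreluD α ⟪uPrev j, xt⟫) * ⟪uPrev j, xt⟫
        = 2 * η * v * yt * L * lrelu α ⟪uPrev j, xt⟫ := by
      rw [← hkey ⟪uPrev j, xt⟫]; ring
    rw [he, hlin]
    have hDq : lreluD α ⟪uPrev j, xt⟫ ^ 2 ≤ 1 := by
      nlinarith [hD0 ⟪uPrev j, xt⟫, hD1 ⟪uPrev j, xt⟫]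
    have hXD : lreluD α ⟪uPrev j, xt⟫ ^ 2 * ‖xt‖ ^ 2 ≤ Rx ^ 2 := by
      nlinarith [sq_nonneg ‖xt‖]
    have e : (η * v * yt * L * lreluD α ⟪uPrev j, xt⟫) ^ 2 * ‖xt‖ ^ 2
        = (η * v * L) ^ 2 * (lreluD α ⟪uPrev j, xt⟫ ^ 2 * ‖xt‖ ^ 2) * yt ^ 2 := by ring
    rw [e, hy2, mul_one]
    nlinarith [mul_le_mul_of_nonneg_left hXD (sq_nonneg (η * v * L))]
  set Sw : ℝ := ∑ j, lrelu α ⟪wPrev j, xt⟫ with hSw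
  set Su : ℝ := ∑ j, lrelu α ⟪uPrev j, xt⟫ with hSu
  have hWsum : ∑ j, ‖wNew j‖ ^ 2 ≤ ∑ j, ‖wPrev j‖ ^ 2
      + 2 * η * v * yt * L * Sw + k * (η ^ 2 * v ^ 2 * Rx ^ 2 * L ^ 2) := by
    calc ∑ j, ‖wNew j‖ ^ 2
        ≤ ∑ j, (‖wPrev j‖ ^ 2 + 2 * η * v * yt * L * lrelu α ⟪wPrev j, xt⟫
            + η ^ 2 * v ^ 2 * Rx ^ 2 * L ^ 2) := Finset.sum_le_sum fun j _ => hwj j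
      _ = ∑ j, ‖wPrev j‖ ^ 2 + 2 * η * v * yt * L * Sw
            + k * (η ^ 2 * v ^ 2 * Rx ^ 2 * L ^ 2) := by
          rw [Finset.sum_add_distrib, Finset.sum_add_distrib, ← Finset.mul_sum,
            Finset.sum_const, Finset.card_univ, Fintype.card_fin, nsmul_eq_mul]
  have hUsum : ∑ j, ‖uNew j‖ ^ 2 ≤ ∑ j, ‖uPrev j‖ ^ 2
      - 2 * η * v * yt * L * Su + k * (η ^ 2 * v ^ 2 * Rx ^ 2 * L ^ 2) := by
    calc ∑ j, ‖uNew j‖ ^ 2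
        ≤ ∑ j, (‖uPrev j‖ ^ 2 - 2 * η * v * yt * L * lrelu α ⟪uPrev j, xt⟫
            + η ^ 2 * v ^ 2 * Rx ^ 2 * L ^ 2) := Finset.sum_le_sum fun j _ => huj j
      _ = ∑ j, ‖uPrev j‖ ^ 2 - 2 * η * v * yt * L * Su
            + k * (η ^ 2 * v ^ 2 * Rx ^ 2 * L ^ 2) := by
          rw [Finset.sum_add_distrib, Finset.sum_sub_distrib, ← Finset.mul_sum,
            Finset.sum_const, Finset.card_univ, Fintype.card_fin, nsmul_eq_mul]
  have hqval : q = yt * (v * Sw - v * Su) := by rw [hq]; rfl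
  have hexp : 2 * η * L * q = 2 * η * v * yt * L * Sw - 2 * η * v * yt * L * Su := by
    rw [hqval]; ring
  have first : ∑ j, ‖wNew j‖ ^ 2 + ∑ j, ‖uNew j‖ ^ 2 ≤
      (∑ j, ‖wPrev j‖ ^ 2 + ∑ j, ‖uPrev j‖ ^ 2) + 2 * η * L * q
        + 2 * k * η ^ 2 * v ^ 2 * Rx ^ 2 * L ^ 2 := by
    have : 2 * (k:ℝ) * η ^ 2 * v ^ 2 * Rx ^ 2 * L ^ 2
        = k * (η ^ 2 * v ^ 2 * Rx ^ 2 * L ^ 2) + k * (η ^ 2 * v ^ 2 * Rx ^ 2 * L ^ 2) := by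
      ring
    rw [hexp, this]
    linarith [hWsum, hUsum]
  refine ⟨first, ?_⟩
  have hk0 : (1:ℝ) ≤ (k:ℝ) := by exact_mod_cast hk
  have hL2 : L ^ 2 ≤ 1 := by nlinarith
  have h1 : 2 * η * L * q ≤ 2 * η := by nlinarith
  have h2 : 2 * (k:ℝ) * η ^ 2 * v ^ 2 * Rx ^ 2 * L ^ 2 ≤ 2 * k * η ^ 2 * v ^ 2 * Rx ^ 2 := by
    have c0 : (0:ℝ) ≤ 2 * (k:ℝ) * η ^ 2 * v ^ 2 * Rx ^ 2 := by positivity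
    nlinarith [mul_le_mul_of_nonneg_left hL2 c0]
  linarith [first]
end

section
/- Consider one SGD step on a point (x_t, y_t) with y_t (w*·x_t) ≥ 1, where w* ∈ ℝ^d is fixed: w_t^(j) = w_{t−1}^(j) + η v y_t |ℓ'(y_t N_{θ_{t−1}}(x_t))| σ'(w_{t−1}^(j)·x_t) x_t and u_t^(j) = u_{t−1}^(j) − η v y_t |ℓ'(y_t N_{θ_{t−1}}(x_t))| σ'(u_{t−1}^(j)·x_t) x_t for all j, where σ'(z) = 1 for z > 0 and σ'(z) = α for z ≤ 0. Define F(W_t) = Σ_{j=1}^k w_t^(j)·w* − Σ_{j=1}^k u_t^(j)·w*. Then F(W_t) ≥ F(W_{t−1}) + 2kηvα·|ℓ'(y_t N_{θ_{t−1}}(x_t))|. -/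
open scoped RealInnerProductSpace BigOperators

/-- One SGD step on a point correctly classified with margin `1` by `w*`:
recursive lower bound on `F(W_t) = Σ_j w_t^(j)·w* - Σ_j u_t^(j)·w*`. -/
theorem F_recursion {d k : ℕ} (hk : 1 ≤ k) (α v η : ℝ)
    (hα0 : 0 < α) (hα1 : α < 1) (hv : 0 < v) (hη : 0 < η)
    (wstar : EuclideanSpace ℝ (Fin d))
    (wPrev uPrev wNew uNew : Fin k → EuclideanSpace ℝ (Fin d))
    (xt : EuclideanSpace ℝ (Fin d)) (yt : ℝ)
    (hyt : yt = 1 ∨ yt = -1)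
    (hmargin : yt * ⟪wstar, xt⟫ ≥ 1)
    (hupdW : ∀ j, wNew j = wPrev j +
      (η * v * yt * |lossD (yt * net α v wPrev uPrev xt)| * lreluD α ⟪wPrev j, xt⟫) • xt)
    (hupdU : ∀ j, uNew j = uPrev j -
      (η * v * yt * |lossD (yt * net α v wPrev uPrev xt)| * lreluD α ⟪uPrev j, xt⟫) • xt) :
    ∑ j, ⟪wNew j, wstar⟫ - ∑ j, ⟪uNew j, wstar⟫ ≥
      (∑ j, ⟪wPrev j, wstar⟫ - ∑ j, ⟪uPrev j, wstar⟫) +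
        2 * k * η * v * α * |lossD (yt * net α v wPrev uPrev xt)| := by
  set L := |lossD (yt * net α v wPrev uPrev xt)| with hLdef
  have hL0 : 0 ≤ L := abs_nonneg _
  have key : ∀ p : EuclideanSpace ℝ (Fin d),
      η * v * yt * L * lreluD α ⟪p, xt⟫ * ⟪xt, wstar⟫ ≥ η * v * α * L := by
    intro p
    have hσ : α ≤ lreluD α ⟪p, xt⟫ := by
      unfold lreluD; split <;> linarith
    have hσ0 : 0 < lreluD α ⟪p, xt⟫ := lt_of_lt_of_le hα0 hσ
    have h1 : (1:ℝ) ≤ yt * ⟪xt, wstar⟫ := by rw [real_inner_comm]; exact hmargin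
    have hc : 0 ≤ η * v * L * lreluD α ⟪p, xt⟫ := by positivity
    calc η * v * yt * L * lreluD α ⟪p, xt⟫ * ⟪xt, wstar⟫
        = (η * v * L * lreluD α ⟪p, xt⟫) * (yt * ⟪xt, wstar⟫) := by ring
      _ ≥ (η * v * L * lreluD α ⟪p, xt⟫) * 1 := by
          exact mul_le_mul_of_nonneg_left h1 hc
      _ = η * v * L * lreluD α ⟪p, xt⟫ := by ring
      _ ≥ η * v * L * α := by
          exact mul_le_mul_of_nonneg_left hσ (by positivity)
      _ = η * v * α * L := by ring
  have hsum : ∀ (ps : Fin k → EuclideanSpace ℝ (Fin d)),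
      ∑ j, η * v * yt * L * lreluD α ⟪ps j, xt⟫ * ⟪xt, wstar⟫ ≥ k * (η * v * α * L) := by
    intro ps
    calc ∑ j, η * v * yt * L * lreluD α ⟪ps j, xt⟫ * ⟪xt, wstar⟫
        ≥ ∑ _j : Fin k, η * v * α * L :=
          Finset.sum_le_sum (fun j _ => key (ps j))
      _ = k * (η * v * α * L) := by
          rw [Finset.sum_const, Finset.card_univ, Fintype.card_fin, nsmul_eq_mul]
  simp only [hupdW, hupdU, inner_add_left, inner_sub_left, real_inner_smul_left,
    Finset.sum_add_distrib, Finset.sum_sub_distrib]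
  have h1 := hsum wPrev
  have h2 := hsum uPrev
  ring_nf
  ring_nf at h1 h2
  linarith
end

section
/- Fix training data (x_1,y_1),…,(x_n,y_n) ∈ ℝ^d × {−1,+1} with ‖x_i‖ ≤ R_x for all i, and consider one epoch of SGD starting at parameters θ_t: at each step the current point (x_{t+h}, y_{t+h}) is one of the n training points (each appearing exactly once over steps h = 1,…,n) and each neuron is updated by w^(j) ← w^(j) + η v y |ℓ'(y N_θ(x))| σ'(w^(j)·x) x and u^(j) ← u^(j) − η v y |ℓ'(y N_θ(x))| σ'(u^(j)·x) x, where σ'(z) = 1 for z > 0 and σ'(z) = α for z ≤ 0. Let ε_0 > 0 and suppose that for every step h = 1,…,n of the epoch, the loss of the point sampled at that step, evaluated at the parameters just before that step, is at most ε_0, i.e. ℓ(y_{t+h} N_{θ_{t+h−1}}(x_{t+h})) ≤ ε_0. Then at the end of the epoch (time T* = t + n), every training point satisfies ℓ(y_i N_{θ_{T*}}(x_i)) ≤ (1 + 2v²R_x²ηkn)·ε_0, and hence the empirical loss satisfies L_S(θ_{T*}) ≤ (1 + 2v²R_x²ηkn)·ε_0. -/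
open scoped RealInnerProductSpace BigOperators

/-- Binary cross entropy loss. -/
noncomputable def loss (q : ℝ) : ℝ := Real.log (1 + Real.exp (-q))

lemma abs_lossD_le_loss (q : ℝ) : |lossD q| ≤ loss q := by
  have hpos : (0:ℝ) < 1 + Real.exp q := by positivity
  have hx : (0:ℝ) < 1 + Real.exp (-q) := by positivity
  have h1 : |lossD q| = (1 + Real.exp q)⁻¹ := by
    rw [lossD, abs_neg, abs_inv, abs_of_pos hpos]
  rw [h1, loss]
  have hlog : 1 - (1 + Real.exp (-q))⁻¹ ≤ Real.log (1 + Real.exp (-q)) := by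
    have := Real.log_le_sub_one_of_pos (inv_pos.mpr hx)
    rw [Real.log_inv] at this
    linarith
  have hab : Real.exp (-q) * Real.exp q = 1 := by rw [← Real.exp_add]; simp
  have heq : 1 - (1 + Real.exp (-q))⁻¹ = (1 + Real.exp q)⁻¹ := by
    field_simp
    nlinarith [Real.exp_pos q, Real.exp_pos (-q)]
  linarith [heq ▸ hlog]

lemma loss_le_loss_add (a b : ℝ) : loss a ≤ loss b + |a - b| := by
  unfold loss
  have h1 : Real.exp (-a) ≤ Real.exp |a - b| * Real.exp (-b) := by
    rw [← Real.exp_add]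
    exact Real.exp_le_exp.mpr (by linarith [neg_le_abs (a - b), neg_abs_le (a - b), le_abs_self (a-b)])
  have h2 : (1:ℝ) ≤ Real.exp |a - b| := Real.one_le_exp (abs_nonneg _)
  have h3 : 1 + Real.exp (-a) ≤ Real.exp |a - b| * (1 + Real.exp (-b)) := by
    nlinarith [Real.exp_pos (-b)]
  calc Real.log (1 + Real.exp (-a)) ≤ Real.log (Real.exp |a-b| * (1 + Real.exp (-b))) :=
        Real.log_le_log (by positivity) h3
    _ = Real.log (1 + Real.exp (-b)) + |a - b| := by
        rw [Real.log_mul (by positivity) (by positivity), Real.log_exp]; ring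

lemma lrelu_lip {α : ℝ} (hα0 : 0 ≤ α) (hα1 : α ≤ 1) (a b : ℝ) :
    |lrelu α a - lrelu α b| ≤ |a - b| := by
  unfold lrelu
  refine (abs_max_sub_max_le_max _ _ _ _).trans ?_
  rw [← mul_sub, abs_mul, abs_of_nonneg hα0]
  exact max_le le_rfl (by nlinarith [abs_nonneg (a - b)])

lemma abs_lreluD_le_one {α : ℝ} (hα0 : 0 ≤ α) (hα1 : α ≤ 1) (z : ℝ) :
    |lreluD α z| ≤ 1 := by
  unfold lreluD
  split <;> simp [abs_of_nonneg hα0, hα1]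


/-- If during one epoch of SGD the loss of each sampled point (evaluated just before it
is used for the update) is at most `ε₀`, then at the end of the epoch every training
point has loss at most `(1 + 2v²Rx²ηkn)ε₀`, and hence the empirical loss is at most
`(1 + 2v²Rx²ηkn)ε₀`. -/
theorem end_of_epoch_loss_bound {d k n : ℕ} (hk : 1 ≤ k) (hn : 1 ≤ n)
    (α v η Rx ε₀ : ℝ)
    (hα0 : 0 < α) (hα1 : α < 1) (hv : 0 < v) (hη : 0 < η) (hRx : 0 < Rx)
    (hε₀ : 0 < ε₀)
    (x : Fin n → EuclideanSpace ℝ (Fin d)) (y : Fin n → ℝ)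
    (hy : ∀ i, y i = 1 ∨ y i = -1)
    (hxb : ∀ i, ‖x i‖ ≤ Rx)
    -- the order in which the `n` points are processed in the epoch
    (idx : Fin n → Fin n) (hidx : Function.Bijective idx)
    -- the SGD iterates during the epoch (`W h, U h` are the parameters before step `h`)
    (W U : ℕ → Fin k → EuclideanSpace ℝ (Fin d))
    (hupdW : ∀ h : Fin n, ∀ j,
      W (h + 1) j = W h j +
        (η * v * y (idx h) *
          |lossD (y (idx h) * net α v (W h) (U h) (x (idx h)))| *
          lreluD α ⟪W h j, x (idx h)⟫) • x (idx h))
    (hupdU : ∀ h : Fin n, ∀ j,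
      U (h + 1) j = U h j -
        (η * v * y (idx h) *
          |lossD (y (idx h) * net α v (W h) (U h) (x (idx h)))| *
          lreluD α ⟪U h j, x (idx h)⟫) • x (idx h))
    -- each sampled point has loss at most ε₀ just before its update
    (hsmall : ∀ h : Fin n,
      loss (y (idx h) * net α v (W h) (U h) (x (idx h))) ≤ ε₀) :
    (∀ i : Fin n,
      loss (y i * net α v (W n) (U n) (x i)) ≤ (1 + 2 * v ^ 2 * Rx ^ 2 * η * k * n) * ε₀) ∧
    (1 / (n : ℝ)) * ∑ i, loss (y i * net α v (W n) (U n) (x i)) ≤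
      (1 + 2 * v ^ 2 * Rx ^ 2 * η * k * n) * ε₀ := by
  set C : ℝ := 2 * v ^ 2 * Rx ^ 2 * η * k * ε₀ with hCdef
  have hC0 : 0 ≤ C := by positivity
  -- per-step change of the network at any bounded point
  have hstep : ∀ h : Fin n, ∀ z : EuclideanSpace ℝ (Fin d), ‖z‖ ≤ Rx →
      |net α v (W (↑h + 1)) (U (↑h + 1)) z - net α v (W ↑h) (U ↑h) z| ≤ C := by
    intro h z hz
    have hq := hsmall h
    have hyh : |y (idx h)| = 1 := by rcases hy (idx h) with h' | h' <;> simp [h']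
    have hD : |lossD (y (idx h) * net α v (W ↑h) (U ↑h) (x (idx h)))| ≤ ε₀ :=
      (abs_lossD_le_loss _).trans hq
    have hDnn : (0:ℝ) ≤ |lossD (y (idx h) * net α v (W ↑h) (U ↑h) (x (idx h)))| := abs_nonneg _
    have hxz : |⟪x (idx h), z⟫| ≤ Rx * Rx := by
      calc |⟪x (idx h), z⟫| ≤ ‖x (idx h)‖ * ‖z‖ := abs_real_inner_le_norm _ _
        _ ≤ Rx * Rx := mul_le_mul (hxb _) hz (norm_nonneg _) hRx.le
    have hcoef : ∀ L : ℝ, |L| ≤ 1 →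
        |η * v * y (idx h) * |lossD (y (idx h) * net α v (W ↑h) (U ↑h) (x (idx h)))| * L|
          ≤ η * v * ε₀ := by
      intro L hL
      have : |η * v * y (idx h) * |lossD (y (idx h) * net α v (W ↑h) (U ↑h) (x (idx h)))| * L|
          = η * v * |y (idx h)| * |lossD (y (idx h) * net α v (W ↑h) (U ↑h) (x (idx h)))| * |L| := by
        rw [abs_mul, abs_mul, abs_mul, abs_mul, abs_of_pos hη, abs_of_pos hv, abs_abs]
      rw [this, hyh]
      calc η * v * 1 * |lossD (y (idx h) * net α v (W ↑h) (U ↑h) (x (idx h)))| * |L|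
          = (η * v) * (|lossD (y (idx h) * net α v (W ↑h) (U ↑h) (x (idx h)))| * |L|) := by ring
        _ ≤ (η * v) * (ε₀ * 1) :=
            mul_le_mul_of_nonneg_left (mul_le_mul hD hL (abs_nonneg _) hε₀.le) (by positivity)
        _ = η * v * ε₀ := by ring
    have hW : ∀ j, |lrelu α ⟪W (↑h + 1) j, z⟫ - lrelu α ⟪W ↑h j, z⟫|
        ≤ η * v * ε₀ * (Rx * Rx) := by
      intro j
      refine (lrelu_lip hα0.le hα1.le _ _).trans ?_
      have hdiff : ⟪W (↑h + 1) j, z⟫ - ⟪W ↑h j, z⟫ =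
          (η * v * y (idx h) * |lossD (y (idx h) * net α v (W ↑h) (U ↑h) (x (idx h)))| *
            lreluD α ⟪W ↑h j, x (idx h)⟫) * ⟪x (idx h), z⟫ := by
        rw [hupdW h j, inner_add_left, real_inner_smul_left]; ring
      rw [hdiff, abs_mul]
      exact mul_le_mul (hcoef _ (abs_lreluD_le_one hα0.le hα1.le _)) hxz (abs_nonneg _)
        (by positivity)
    have hU : ∀ j, |lrelu α ⟪U (↑h + 1) j, z⟫ - lrelu α ⟪U ↑h j, z⟫|
        ≤ η * v * ε₀ * (Rx * Rx) := by
      intro j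
      refine (lrelu_lip hα0.le hα1.le _ _).trans ?_
      have hdiff : ⟪U (↑h + 1) j, z⟫ - ⟪U ↑h j, z⟫ =
          -((η * v * y (idx h) * |lossD (y (idx h) * net α v (W ↑h) (U ↑h) (x (idx h)))| *
            lreluD α ⟪U ↑h j, x (idx h)⟫) * ⟪x (idx h), z⟫) := by
        rw [hupdU h j, inner_sub_left, real_inner_smul_left]; ring
      rw [hdiff, abs_neg, abs_mul]
      exact mul_le_mul (hcoef _ (abs_lreluD_le_one hα0.le hα1.le _)) hxz (abs_nonneg _)
        (by positivity)
    have hsumW : |∑ j, lrelu α ⟪W (↑h + 1) j, z⟫ - ∑ j, lrelu α ⟪W ↑h j, z⟫|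
        ≤ k * (η * v * ε₀ * (Rx * Rx)) := by
      rw [← Finset.sum_sub_distrib]
      refine (Finset.abs_sum_le_sum_abs _ _).trans ?_
      refine (Finset.sum_le_sum fun j _ => hW j).trans ?_
      rw [Finset.sum_const, Finset.card_univ, Fintype.card_fin, nsmul_eq_mul]
    have hsumU : |∑ j, lrelu α ⟪U (↑h + 1) j, z⟫ - ∑ j, lrelu α ⟪U ↑h j, z⟫|
        ≤ k * (η * v * ε₀ * (Rx * Rx)) := by
      rw [← Finset.sum_sub_distrib]
      refine (Finset.abs_sum_le_sum_abs _ _).trans ?_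
      refine (Finset.sum_le_sum fun j _ => hU j).trans ?_
      rw [Finset.sum_const, Finset.card_univ, Fintype.card_fin, nsmul_eq_mul]
    have hnet : net α v (W (↑h + 1)) (U (↑h + 1)) z - net α v (W ↑h) (U ↑h) z =
        v * (∑ j, lrelu α ⟪W (↑h + 1) j, z⟫ - ∑ j, lrelu α ⟪W ↑h j, z⟫)
        - v * (∑ j, lrelu α ⟪U (↑h + 1) j, z⟫ - ∑ j, lrelu α ⟪U ↑h j, z⟫) := by
      simp only [net]; ring
    rw [hnet]
    calc |v * (∑ j, lrelu α ⟪W (↑h + 1) j, z⟫ - ∑ j, lrelu α ⟪W ↑h j, z⟫)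
        - v * (∑ j, lrelu α ⟪U (↑h + 1) j, z⟫ - ∑ j, lrelu α ⟪U ↑h j, z⟫)|
        ≤ |v * (∑ j, lrelu α ⟪W (↑h + 1) j, z⟫ - ∑ j, lrelu α ⟪W ↑h j, z⟫)|
          + |v * (∑ j, lrelu α ⟪U (↑h + 1) j, z⟫ - ∑ j, lrelu α ⟪U ↑h j, z⟫)| :=
        abs_sub _ _
      _ ≤ v * (k * (η * v * ε₀ * (Rx * Rx))) + v * (k * (η * v * ε₀ * (Rx * Rx))) := by
        rw [abs_mul, abs_mul, abs_of_pos hv]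
        exact add_le_add (mul_le_mul_of_nonneg_left hsumW hv.le)
          (mul_le_mul_of_nonneg_left hsumU hv.le)
      _ = C := by rw [hCdef]; ring
  -- pointwise bound
  have hpt : ∀ i : Fin n,
      loss (y i * net α v (W n) (U n) (x i)) ≤ (1 + 2 * v ^ 2 * Rx ^ 2 * η * k * n) * ε₀ := by
    intro i
    obtain ⟨h0, hh0⟩ := hidx.surjective i
    have hyi : |y i| = 1 := by rcases hy i with h' | h' <;> simp [h']
    set q : ℕ → ℝ := fun m => y i * net α v (W m) (U m) (x i) with hqdef
    have key : ∀ m : ℕ, m ≤ n → (h0 : ℕ) ≤ m →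
        |q m - q (h0 : ℕ)| ≤ ((m - (h0 : ℕ) : ℕ) : ℝ) * C := by
      intro m
      induction m with
      | zero =>
        intro _ hle
        have : (h0 : ℕ) = 0 := Nat.le_zero.mp hle
        simp [this]
      | succ m ih =>
        intro hmn hh0m
        rcases Nat.lt_or_ge (h0 : ℕ) (m + 1) with hlt | hge
        · have hh0m' : (h0 : ℕ) ≤ m := Nat.lt_succ_iff.mp hlt
          have hm : m < n := Nat.lt_of_succ_le hmn
          have hstep' := hstep ⟨m, hm⟩ (x i) (hxb i)
          have hqs : |q (m + 1) - q m| ≤ C := by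
            have : q (m + 1) - q m =
                y i * (net α v (W (m + 1)) (U (m + 1)) (x i) - net α v (W m) (U m) (x i)) := by
              simp only [hqdef]; ring
            rw [this, abs_mul, hyi, one_mul]
            simpa using hstep'
          have hrec := ih (Nat.le_of_succ_le hmn) hh0m'
          have hcast : ((m + 1 - (h0 : ℕ) : ℕ) : ℝ) = ((m - (h0 : ℕ) : ℕ) : ℝ) + 1 := by
            rw [Nat.succ_sub hh0m']; push_cast; ring
          calc |q (m + 1) - q (h0 : ℕ)|
              ≤ |q (m + 1) - q m| + |q m - q (h0 : ℕ)| := by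
                have := abs_sub_le (q (m + 1)) (q m) (q (h0 : ℕ)); linarith
            _ ≤ C + ((m - (h0 : ℕ) : ℕ) : ℝ) * C := add_le_add hqs hrec
            _ = ((m + 1 - (h0 : ℕ) : ℕ) : ℝ) * C := by rw [hcast]; ring
        · have : (h0 : ℕ) = m + 1 := le_antisymm hh0m hge
          simp [this]
    have hloss0 : loss (q (h0 : ℕ)) ≤ ε₀ := by
      have := hsmall h0
      rw [hh0] at this
      exact this
    have hdist : |q n - q (h0 : ℕ)| ≤ (n : ℝ) * C := by
      refine (key n le_rfl (Nat.le_of_lt_succ (Nat.lt_succ_of_lt h0.isLt))).trans ?_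
      have : ((n - (h0 : ℕ) : ℕ) : ℝ) ≤ (n : ℝ) := by
        exact_mod_cast Nat.sub_le n (h0 : ℕ)
      exact mul_le_mul_of_nonneg_right this hC0
    calc loss (q n) ≤ loss (q (h0 : ℕ)) + |q n - q (h0 : ℕ)| := loss_le_loss_add _ _
      _ ≤ ε₀ + (n : ℝ) * C := add_le_add hloss0 hdist
      _ = (1 + 2 * v ^ 2 * Rx ^ 2 * η * k * n) * ε₀ := by rw [hCdef]; ring
  refine ⟨hpt, ?_⟩
  have hn0 : (0:ℝ) < n := by exact_mod_cast hn
  have hsum : ∑ i, loss (y i * net α v (W n) (U n) (x i))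
      ≤ (n : ℝ) * ((1 + 2 * v ^ 2 * Rx ^ 2 * η * k * n) * ε₀) := by
    calc ∑ i, loss (y i * net α v (W n) (U n) (x i))
        ≤ ∑ _i : Fin n, (1 + 2 * v ^ 2 * Rx ^ 2 * η * k * n) * ε₀ :=
          Finset.sum_le_sum fun i _ => hpt i
      _ = (n : ℝ) * ((1 + 2 * v ^ 2 * Rx ^ 2 * η * k * n) * ε₀) := by
          rw [Finset.sum_const, Finset.card_univ, Fintype.card_fin, nsmul_eq_mul]
  calc (1 / (n : ℝ)) * ∑ i, loss (y i * net α v (W n) (U n) (x i))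
      ≤ (1 / (n : ℝ)) * ((n : ℝ) * ((1 + 2 * v ^ 2 * Rx ^ 2 * η * k * n) * ε₀)) :=
        mul_le_mul_of_nonneg_left hsum (by positivity)
    _ = (1 + 2 * v ^ 2 * Rx ^ 2 * η * k * n) * ε₀ := by field_simp
end

section
/- Let θ = (w^(1),…,w^(k),u^(1),…,u^(k)) be network parameters with not all vectors zero, and let (x_+, +1) be a training point in the training set S such that w^(i)·x_+ ≤ 0 for all i = 1,…,k. Then the normalized margin of the network on S satisfies γ̄(θ) := (1/‖θ‖)·min_{(x,y)∈S} y·N_θ(x) ≤ (1/‖θ‖)·N_θ(x_+) ≤ √k · α · v · ‖x_+‖ ≤ √k · α · v · max_{(x,y)∈S} ‖x‖, where ‖θ‖ = √(Σ_{i=1}^k ‖w^(i)‖² + Σ_{i=1}^k ‖u^(i)‖²). -/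
open scoped RealInnerProductSpace BigOperators

/-- If some positive training point `x₊` satisfies `w^(i)·x₊ ≤ 0` for every `w` neuron,
then the normalized margin of the network on the training set is at most
`√k · α · v · ‖x₊‖ ≤ √k · α · v · max_{(x,y) ∈ S} ‖x‖`. -/
theorem normalized_margin_bound {d k : ℕ} (hk : 1 ≤ k) (α v : ℝ)
    (hα0 : 0 < α) (hα1 : α < 1) (hv : 0 < v)
    (w u : Fin k → EuclideanSpace ℝ (Fin d))
    (hθ : 0 < Real.sqrt (∑ i, ‖w i‖ ^ 2 + ∑ i, ‖u i‖ ^ 2))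
    (S : Finset (EuclideanSpace ℝ (Fin d) × ℝ)) (hS : S.Nonempty)
    (hlab : ∀ p ∈ S, p.2 = 1 ∨ p.2 = -1)
    (xp : EuclideanSpace ℝ (Fin d)) (hxp : (xp, (1 : ℝ)) ∈ S)
    (hneg : ∀ i, ⟪w i, xp⟫ ≤ 0) :
    ((Real.sqrt (∑ i, ‖w i‖ ^ 2 + ∑ i, ‖u i‖ ^ 2))⁻¹ *
        S.inf' hS (fun p => p.2 * net α v w u p.1) ≤
      (Real.sqrt (∑ i, ‖w i‖ ^ 2 + ∑ i, ‖u i‖ ^ 2))⁻¹ * net α v w u xp) ∧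
    ((Real.sqrt (∑ i, ‖w i‖ ^ 2 + ∑ i, ‖u i‖ ^ 2))⁻¹ * net α v w u xp ≤
      Real.sqrt k * α * v * ‖xp‖) ∧
    (Real.sqrt k * α * v * ‖xp‖ ≤
      Real.sqrt k * α * v * S.sup' hS (fun p => ‖p.1‖)) := by

  set T := Real.sqrt (∑ i, ‖w i‖ ^ 2 + ∑ i, ‖u i‖ ^ 2) with hTdef
  have hTpos : 0 < T := hθ
  have hTinv : (0:ℝ) ≤ T⁻¹ := inv_nonneg.2 hTpos.le
  -- part 1
  have h1 : S.inf' hS (fun p => p.2 * net α v w u p.1) ≤ net α v w u xp := by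
    have := Finset.inf'_le (fun p => p.2 * net α v w u p.1) hxp
    exact this.trans_eq (by simp)
  -- part 2 ingredients
  have hwle : ∀ i : Fin k, lrelu α ⟪w i, xp⟫ ≤ 0 := by
    intro i
    have h := hneg i
    exact max_le h (by nlinarith)
  have hule : ∀ i : Fin k, -(lrelu α ⟪u i, xp⟫) ≤ α * (‖u i‖ * ‖xp‖) := by
    intro i
    have h1 : α * ⟪u i, xp⟫ ≤ lrelu α ⟪u i, xp⟫ := le_max_right _ _
    have h2 : |⟪u i, xp⟫| ≤ ‖u i‖ * ‖xp‖ := abs_real_inner_le_norm _ _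
    nlinarith [neg_abs_le ⟪u i, xp⟫]
  have hcs : ∑ i, ‖u i‖ ≤ Real.sqrt k * Real.sqrt (∑ i, ‖u i‖ ^ 2) := by
    have hsq : (∑ i, ‖u i‖) ^ 2 ≤ (k : ℝ) * ∑ i, ‖u i‖ ^ 2 := by
      have := sq_sum_le_card_mul_sum_sq (s := Finset.univ) (f := fun i : Fin k => ‖u i‖)
      simpa using this
    have h0 : (0:ℝ) ≤ ∑ i, ‖u i‖ := Finset.sum_nonneg fun i _ => norm_nonneg _
    calc ∑ i, ‖u i‖ = Real.sqrt ((∑ i, ‖u i‖) ^ 2) := (Real.sqrt_sq h0).symm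
      _ ≤ Real.sqrt ((k : ℝ) * ∑ i, ‖u i‖ ^ 2) := Real.sqrt_le_sqrt hsq
      _ = Real.sqrt k * Real.sqrt (∑ i, ‖u i‖ ^ 2) := Real.sqrt_mul (Nat.cast_nonneg k) _
  have hsub : Real.sqrt (∑ i, ‖u i‖ ^ 2) ≤ T := by
    apply Real.sqrt_le_sqrt
    have : (0:ℝ) ≤ ∑ i, ‖w i‖ ^ 2 := Finset.sum_nonneg fun i _ => sq_nonneg _
    linarith
  have hnet : net α v w u xp ≤ Real.sqrt k * α * v * ‖xp‖ * T := by
    have hA : ∑ i, lrelu α ⟪w i, xp⟫ ≤ 0 := Finset.sum_nonpos fun i _ => hwle i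
    have hB : -(∑ i, lrelu α ⟪u i, xp⟫) ≤ α * ‖xp‖ * ∑ i, ‖u i‖ := by
      rw [← Finset.sum_neg_distrib, Finset.mul_sum]
      exact Finset.sum_le_sum fun i _ => by
        have := hule i; ring_nf; ring_nf at this; linarith
    have hsum : ∑ i, ‖u i‖ ≤ Real.sqrt k * T :=
      hcs.trans (mul_le_mul_of_nonneg_left hsub (Real.sqrt_nonneg _))
    have hx0 : (0:ℝ) ≤ ‖xp‖ := norm_nonneg _
    unfold net
    nlinarith [mul_le_mul_of_nonneg_left hsum (mul_nonneg (mul_nonneg hα0.le hx0) hv.le)]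
  have h2 : T⁻¹ * net α v w u xp ≤ Real.sqrt k * α * v * ‖xp‖ := by
    have := mul_le_mul_of_nonneg_left hnet hTinv
    calc T⁻¹ * net α v w u xp ≤ T⁻¹ * (Real.sqrt k * α * v * ‖xp‖ * T) := this
      _ = Real.sqrt k * α * v * ‖xp‖ := by
          field_simp
  refine ⟨mul_le_mul_of_nonneg_left h1 hTinv, h2, ?_⟩
  have h3 : ‖xp‖ ≤ S.sup' hS (fun p => ‖p.1‖) := Finset.le_sup' (fun p => ‖p.1‖) hxp
  have hc : (0:ℝ) ≤ Real.sqrt k * α * v :=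
    mul_nonneg (mul_nonneg (Real.sqrt_nonneg _) hα0.le) hv.le
  exact mul_le_mul_of_nonneg_left h3 hc
end

section
/- Let (x_1,y_1),…,(x_n,y_n) ∈ ℝ^d × {−1,+1} and let θ = (w^(1),…,w^(k),u^(1),…,u^(k)) be network parameters in a neural agreement regime in the following sense: there exist c^w, c^u ∈ {α,1}^n such that for every i and every 1 ≤ l ≤ k, w^(l)·x_i ≠ 0, u^(l)·x_i ≠ 0, σ'(w^(l)·x_i) = c^w_i, and σ'(u^(l)·x_i) = c^u_i, where σ'(z) = 1 for z > 0 and σ'(z) = α for z < 0. Suppose θ satisfies the KKT stationarity condition of the margin maximization problem, i.e., there exist λ_1,…,λ_n ≥ 0 such that for every 1 ≤ j ≤ k, w^(j) = Σ_{i=1}^n λ_i y_i v σ'(w^(j)·x_i) x_i and u^(j) = −Σ_{i=1}^n λ_i y_i v σ'(u^(j)·x_i) x_i. Then the network is perfectly clustered: w^(j) = w^(l) and u^(j) = u^(l) for all 1 ≤ j, l ≤ k; explicitly, every w^(j) equals Σ_{i=1}^n λ_i y_i v c^w_i x_i and every u^(j) equals −Σ_{i=1}^n λ_i y_i v c^u_i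 x_i. -/
open scoped RealInnerProductSpace BigOperators

/-- In a neural agreement regime (all `w` neurons and all `u` neurons agree, with
nonzero dot products, on every training point), any parameters satisfying the KKT
stationarity condition of the margin maximization problem are perfectly clustered:
all `w` neurons are equal, all `u` neurons are equal, and they are given explicitly by
the KKT linear combinations of the data. -/
theorem kkt_in_nar_perfectly_clustered {d k n : ℕ} (hk : 1 ≤ k) (hn : 1 ≤ n)
    (α v : ℝ) (hα0 : 0 < α) (hα1 : α < 1) (hv : 0 < v)
    (x : Fin n → EuclideanSpace ℝ (Fin d)) (y : Fin n → ℝ)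
    (hy : ∀ i, y i = 1 ∨ y i = -1)
    (w u : Fin k → EuclideanSpace ℝ (Fin d))
    (cw cu : Fin n → ℝ)
    (hcw : ∀ i, cw i = α ∨ cw i = 1)
    (hcu : ∀ i, cu i = α ∨ cu i = 1)
    (hnzw : ∀ i, ∀ l, ⟪w l, x i⟫ ≠ 0)
    (hnzu : ∀ i, ∀ l, ⟪u l, x i⟫ ≠ 0)
    (hagreew : ∀ i, ∀ l, lreluD α ⟪w l, x i⟫ = cw i)
    (hagreeu : ∀ i, ∀ l, lreluD α ⟪u l, x i⟫ = cu i)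
    (lam : Fin n → ℝ) (hlam : ∀ i, 0 ≤ lam i)
    (hKKTw : ∀ j, w j = ∑ i, (lam i * y i * v * lreluD α ⟪w j, x i⟫) • x i)
    (hKKTu : ∀ j, u j = -∑ i, (lam i * y i * v * lreluD α ⟪u j, x i⟫) • x i) :
    (∀ j l, w j = w l ∧ u j = u l) ∧
    (∀ j, w j = ∑ i, (lam i * y i * v * cw i) • x i) ∧
    (∀ j, u j = -∑ i, (lam i * y i * v * cu i) • x i) := by
  have hw : ∀ j, w j = ∑ i, (lam i * y i * v * cw i) • x i := by
    intro j
    rw [hKKTw j]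
    exact Finset.sum_congr rfl fun i _ => by rw [hagreew i j]
  have hu : ∀ j, u j = -∑ i, (lam i * y i * v * cu i) • x i := by
    intro j
    rw [hKKTu j]
    congr 1
    exact Finset.sum_congr rfl fun i _ => by rw [hagreeu i j]
  exact ⟨fun j l => ⟨(hw j).trans (hw l).symm, (hu j).trans (hu l).symm⟩, hw, hu⟩
end
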